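/- arXiv:1102.3041 — 5 statements merged into one kernel-verified Lean document; each statement's English description precedes it below -/
import Mathlib

section
/- For a fixed parameter a in (0,1) and density matrices ρ and σ on a finite-dimensional Hilbert space, the telescopic relative entropy S_a(ρ||σ) := S(ρ || aρ+(1-a)σ)/(-log a), where S(ρ||τ) = Tr ρ(log ρ - log τ), satisfies 0 ≤ S_a(ρ||σ) ≤ 1. -/
open Matrix MeasureTheory Real Filter
open scoped ComplexOrder

/-- Matrix logarithm of a Hermitian matrix via its spectral decomposition
(junk value `0` on non-Hermitian input). -/
noncomputable def mlog {d : ℕ} (A : Matrix (Fin d) (Fin d) ℂ) : Matrix (Fin d) (Fin d) ℂ :=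
  if h : A.IsHermitian then
    (h.eigenvectorUnitary : Matrix (Fin d) (Fin d) ℂ) *
      Matrix.diagonal (fun i => (Real.log (h.eigenvalues i) : ℂ)) *
      (star (h.eigenvectorUnitary : Matrix (Fin d) (Fin d) ℂ))
  else 0

/-- Quantum relative entropy `S(A‖B) = Tr A (log A − log B)` (real part of the trace). -/
noncomputable def relEntropy {d : ℕ} (A B : Matrix (Fin d) (Fin d) ℂ) : ℝ :=
  (Matrix.trace (A * (mlog A - mlog B))).re

/-- A density matrix: positive semidefinite with unit trace. -/
def IsDensity {d : ℕ} (ρ : Matrix (Fin d) (Fin d) ℂ) : Prop :=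
  ρ.PosSemidef ∧ ρ.trace = 1

/-- Telescopic relative entropy `S_a(ρ‖σ) = S(ρ‖aρ+(1−a)σ)/(−log a)`. -/
noncomputable def tre {d : ℕ} (a : ℝ) (ρ σ : Matrix (Fin d) (Fin d) ℂ) : ℝ :=
  relEntropy ρ (a • ρ + (1 - a) • σ) / (-Real.log a)

/-- Scalar telescopic relative entropy `S_a(b‖c) = b(log b − log(ab+(1−a)c))/(−log a)`. -/
noncomputable def sclTre (a b c : ℝ) : ℝ :=
  b * (Real.log b - Real.log (a * b + (1 - a) * c)) / (-Real.log a)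

/-- Projector onto the support of a Hermitian matrix (junk value `0` otherwise). -/
noncomputable def suppProj {d : ℕ} (A : Matrix (Fin d) (Fin d) ℂ) : Matrix (Fin d) (Fin d) ℂ :=
  if h : A.IsHermitian then
    (h.eigenvectorUnitary : Matrix (Fin d) (Fin d) ℂ) *
      Matrix.diagonal (fun i => if h.eigenvalues i = 0 then (0:ℂ) else 1) *
      (star (h.eigenvectorUnitary : Matrix (Fin d) (Fin d) ℂ))
  else 0

/-- The map `T_A(Δ) = ∫₀^∞ (A+sI)⁻¹ Δ (A+sI)⁻¹ ds`, defined entrywise. -/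
noncomputable def Tmap {d : ℕ} (A Δ : Matrix (Fin d) (Fin d) ℂ) : Matrix (Fin d) (Fin d) ℂ :=
  Matrix.of fun i j => ∫ s in Set.Ioi (0:ℝ),
    ((A + (s:ℂ) • 1)⁻¹ * Δ * (A + (s:ℂ) • 1)⁻¹) i j

/-- The map `R_A(Δ) = 2∫₀^∞ (A+sI)⁻¹ Δ (A+sI)⁻¹ Δ (A+sI)⁻¹ ds`, defined entrywise. -/
noncomputable def Rmap {d : ℕ} (A Δ : Matrix (Fin d) (Fin d) ℂ) : Matrix (Fin d) (Fin d) ℂ :=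
  Matrix.of fun i j => (2:ℂ) * ∫ s in Set.Ioi (0:ℝ),
    ((A + (s:ℂ) • 1)⁻¹ * Δ * (A + (s:ℂ) • 1)⁻¹ * Δ * (A + (s:ℂ) • 1)⁻¹) i j

/-- Trace norm of a Hermitian matrix: sum of absolute values of eigenvalues. -/
noncomputable def traceNorm {d : ℕ} (A : Matrix (Fin d) (Fin d) ℂ) : ℝ :=
  if h : A.IsHermitian then ∑ i, |h.eigenvalues i| else 0

/-- Trace-norm distance `T(ρ,σ) = ½‖ρ−σ‖₁`. -/
noncomputable def traceDist {d : ℕ} (ρ σ : Matrix (Fin d) (Fin d) ℂ) : ℝ :=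
  traceNorm (ρ - σ) / 2

set_option maxHeartbeats 1000000
open scoped Topology

variable {d : ℕ}

/-- conjugation by a unitary -/
noncomputable def uconj (V : Matrix (Fin d) (Fin d) ℂ) (μ : Fin d → ℂ) :
    Matrix (Fin d) (Fin d) ℂ := V * Matrix.diagonal μ * star V

lemma uconj_mul {V : Matrix (Fin d) (Fin d) ℂ} (hV : V ∈ Matrix.unitaryGroup (Fin d) ℂ)
    (μ ν : Fin d → ℂ) : uconj V μ * uconj V ν = uconj V (μ * ν) := by
  have h1 : star V * V = 1 := Matrix.UnitaryGroup.star_mul_self ⟨V, hV⟩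
  simp only [uconj, Matrix.mul_assoc]
  rw [← Matrix.mul_assoc (star V) V, h1, Matrix.one_mul, ← Matrix.mul_assoc (Matrix.diagonal μ),
    Matrix.diagonal_mul_diagonal]
  rfl

lemma uconj_one {V : Matrix (Fin d) (Fin d) ℂ} (hV : V ∈ Matrix.unitaryGroup (Fin d) ℂ) :
    uconj V 1 = 1 := by
  have h2 : V * star V = 1 := Matrix.mem_unitaryGroup_iff.mp hV
  simp only [uconj, Pi.one_def, Matrix.diagonal_one, Matrix.mul_one, h2]

lemma diagonal_real_isHermitian (μ : Fin d → ℝ) :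
    (Matrix.diagonal (fun i => (μ i : ℂ))).IsHermitian := by
  exact Matrix.isHermitian_diagonal_of_self_adjoint _
    (by funext i; exact Complex.conj_ofReal _)

lemma uconj_isHermitian {V : Matrix (Fin d) (Fin d) ℂ} (μ : Fin d → ℝ) :
    (uconj V (fun i => (μ i : ℂ))).IsHermitian := by
  unfold uconj
  rw [Matrix.star_eq_conjTranspose]
  exact Matrix.isHermitian_mul_mul_conjTranspose V (diagonal_real_isHermitian μ)

lemma uconj_posSemidef {V : Matrix (Fin d) (Fin d) ℂ} (μ : Fin d → ℝ) (hμ : ∀ i, 0 ≤ μ i) :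
    (uconj V (fun i => (μ i : ℂ))).PosSemidef := by
  have hD : (Matrix.diagonal (fun i => (μ i : ℂ))).PosSemidef := by
    refine Matrix.PosSemidef.diagonal fun i => ?_
    change (0:ℂ) ≤ _
    rw [Complex.zero_le_real]
    exact hμ i
  have := hD.mul_mul_conjTranspose_same V
  rwa [← Matrix.star_eq_conjTranspose] at this

lemma uconj_add {V : Matrix (Fin d) (Fin d) ℂ} (μ ν : Fin d → ℂ) :
    uconj V μ + uconj V ν = uconj V (μ + ν) := by
  unfold uconj
  rw [show Matrix.diagonal (μ + ν) = Matrix.diagonal μ + Matrix.diagonal ν from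
    (Matrix.diagonal_add μ ν).symm, Matrix.mul_add, Matrix.add_mul]

lemma re_trace_mul_uconj (ρ : Matrix (Fin d) (Fin d) ℂ) (V : Matrix (Fin d) (Fin d) ℂ)
    (ν : Fin d → ℝ) :
    (Matrix.trace (ρ * uconj V (fun i => (ν i : ℂ)))).re
      = ∑ j, ((star V * ρ * V) j j).re * ν j := by
  unfold uconj
  simp only [← Matrix.mul_assoc]
  rw [Matrix.trace_mul_comm]
  simp only [← Matrix.mul_assoc]
  rw [Matrix.trace]
  simp only [Matrix.diag_apply, Matrix.mul_diagonal, Complex.re_sum]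
  congr 1; ext j
  simp [Complex.mul_re]

lemma conj_entry_eq_dot (ρ V : Matrix (Fin d) (Fin d) ℂ) (j : Fin d) :
    (star V * ρ * V) j j
      = dotProduct (star (fun i => V i j)) (ρ *ᵥ (fun i => V i j)) := by
  simp only [Matrix.star_eq_conjTranspose, Matrix.mul_apply, Matrix.conjTranspose_apply,
    dotProduct, Matrix.mulVec, Pi.star_apply, Finset.sum_mul, Finset.mul_sum]
  rw [Finset.sum_comm]
  congr 1; ext i
  congr 1; ext k
  ring

lemma conj_entry_nonneg {ρ : Matrix (Fin d) (Fin d) ℂ} (hρ : ρ.PosSemidef)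
    (V : Matrix (Fin d) (Fin d) ℂ) (j : Fin d) :
    0 ≤ ((star V * ρ * V) j j).re := by
  rw [conj_entry_eq_dot]
  have := hρ.dotProduct_mulVec_nonneg (fun i => V i j)
  exact (Complex.le_def.mp this).1

lemma sum_conj_diag_re {ρ V : Matrix (Fin d) (Fin d) ℂ}
    (hV : V ∈ Matrix.unitaryGroup (Fin d) ℂ) :
    ∑ j, ((star V * ρ * V) j j).re = (Matrix.trace ρ).re := by
  have h2 : V * star V = 1 := Matrix.mem_unitaryGroup_iff.mp hV
  have : Matrix.trace (star V * ρ * V) = Matrix.trace ρ := by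
    rw [Matrix.trace_mul_cycle, h2, Matrix.one_mul]
  rw [← this, Matrix.trace]
  simp [Complex.re_sum]

/-- trace of PSD product is nonneg -/
lemma re_trace_mul_psd {ρ M : Matrix (Fin d) (Fin d) ℂ} (hρ : ρ.PosSemidef)
    (hM : M.PosSemidef) : 0 ≤ (Matrix.trace (ρ * M)).re := by
  obtain ⟨B, rfl⟩ : ∃ B : Matrix (Fin d) (Fin d) ℂ, M = Bᴴ * B := by
    classical
    open scoped MatrixOrder in
    obtain ⟨X, hX, -, rfl⟩ := CFC.exists_sqrt_of_isSelfAdjoint_of_quasispectrumRestricts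
      hM.isHermitian (QuasispectrumRestricts.nnreal_of_nonneg hM.nonneg)
    exact ⟨X, by rw [← Matrix.star_eq_conjTranspose, hX.star_eq]⟩
  have h1 : Matrix.trace (ρ * (Bᴴ * B)) = Matrix.trace (B * ρ * Bᴴ) := by
    rw [← Matrix.mul_assoc, Matrix.trace_mul_cycle]
  rw [h1]
  have hpsd := hρ.mul_mul_conjTranspose_same B
  rw [Matrix.trace, Complex.re_sum]
  refine Finset.sum_nonneg fun i _ => ?_
  have := hpsd.dotProduct_mulVec_nonneg (Pi.single i 1)
  have hentry : dotProduct (star (Pi.single i 1)) ((B * ρ * Bᴴ) *ᵥ Pi.single i 1)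
      = (B * ρ * Bᴴ) i i := by
    simp [Matrix.mulVec_single, dotProduct, Pi.single_apply, apply_ite (star : ℂ → ℂ)]
  rw [hentry] at this
  exact (Complex.le_def.mp this).1

lemma inv_sub_inv_psd {P Q P' Q' : Matrix (Fin d) (Fin d) ℂ}
    (hP' : P'.PosSemidef) (hQ' : Q'.PosSemidef)
    (hP'P : P' * P = 1) (hQQ' : Q * Q' = 1) (hQ'Q : Q' * Q = 1)
    (hPP' : P * P' = 1) (hΔ : (Q - P).PosSemidef) : (P' - Q').PosSemidef := by
  have h1 : P' * (Q - P) * Q' = P' - Q' := by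
    have e : P' * (Q - P) * Q' = P' * (Q * Q') - P' * P * Q' := by noncomm_ring
    rw [e, hQQ', hP'P, Matrix.mul_one, Matrix.one_mul]
  have h2 : Q' * (Q - P) * P' = P' - Q' := by
    have e : Q' * (Q - P) * P' = Q' * Q * P' - Q' * (P * P') := by noncomm_ring
    rw [e, hQ'Q, hPP', Matrix.one_mul, Matrix.mul_one]
  have h1' : P' = Q' + P' * (Q - P) * Q' := by rw [h1]; abel
  have h3 : P' - Q' = Q' * (Q - P) * Q' + (Q' * (Q - P)) * P' * ((Q - P) * Q') := by
    calc P' - Q' = Q' * (Q - P) * P' := h2.symm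
    _ = Q' * (Q - P) * (Q' + P' * (Q - P) * Q') := by rw [← h1']
    _ = Q' * (Q - P) * Q' + (Q' * (Q - P)) * P' * ((Q - P) * Q') := by noncomm_ring
  have e1 : (Q' * (Q - P) * Q').PosSemidef := by
    have := hΔ.mul_mul_conjTranspose_same Q'
    rwa [hQ'.1] at this
  have e2 : ((Q' * (Q - P)) * P' * ((Q - P) * Q')).PosSemidef := by
    have := hP'.mul_mul_conjTranspose_same (Q' * (Q - P))
    rwa [Matrix.conjTranspose_mul, hQ'.1, hΔ.1] at this
  rw [h3]
  exact e1.add e2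

lemma smul_uconj (V : Matrix (Fin d) (Fin d) ℂ) (b : ℝ) (μ : Fin d → ℝ) :
    b • uconj V (fun i => (μ i : ℂ)) = uconj V (fun i => ((b * μ i : ℝ) : ℂ)) := by
  unfold uconj
  have h : (Matrix.diagonal fun i => ((b * μ i : ℝ) : ℂ))
      = b • Matrix.diagonal (fun i => ((μ i : ℝ) : ℂ)) := by
    ext i j
    by_cases hij : i = j <;>
      simp [Matrix.diagonal_apply, hij, Matrix.smul_apply, Complex.real_smul]
  rw [h, Matrix.mul_smul, Matrix.smul_mul]

lemma smul_one_eq_uconj {V : Matrix (Fin d) (Fin d) ℂ}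
    (hV : V ∈ Matrix.unitaryGroup (Fin d) ℂ) (δ : ℝ) :
    δ • (1 : Matrix (Fin d) (Fin d) ℂ) = uconj V (fun _ => ((δ : ℝ) : ℂ)) := by
  have h2 : V * star V = 1 := Matrix.mem_unitaryGroup_iff.mp hV
  unfold uconj
  have h : (Matrix.diagonal fun _ : Fin d => ((δ:ℝ):ℂ)) = δ • (1 : Matrix (Fin d) (Fin d) ℂ) := by
    ext i j
    by_cases hij : i = j <;>
      simp [Matrix.diagonal_apply, hij, Matrix.one_apply, Matrix.smul_apply, Complex.real_smul]
  rw [h, Matrix.mul_smul, Matrix.smul_mul, Matrix.mul_one, h2]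

lemma mulVec_col_eq (M N : Matrix (Fin d) (Fin d) ℂ) (j : Fin d) :
    M *ᵥ (fun i => N i j) = fun i => (M * N) i j := by
  funext i
  simp [Matrix.mulVec, Matrix.mul_apply, dotProduct]

lemma uconj_eigen_eq (f : ℝ → ℝ) {A V : Matrix (Fin d) (Fin d) ℂ}
    (hA : A.IsHermitian) (hV : V ∈ Matrix.unitaryGroup (Fin d) ℂ) (μ : Fin d → ℝ)
    (hAV : A = uconj V (fun i => (μ i : ℂ))) :
    uconj (hA.eigenvectorUnitary : Matrix (Fin d) (Fin d) ℂ)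
        (fun i => (f (hA.eigenvalues i) : ℂ))
      = uconj V (fun i => (f (μ i) : ℂ)) := by
  set U := (hA.eigenvectorUnitary : Matrix (Fin d) (Fin d) ℂ) with hUdef
  have hU : U ∈ Matrix.unitaryGroup (Fin d) ℂ := (hA.eigenvectorUnitary).2
  have hUsU : star U * U = 1 := Matrix.UnitaryGroup.star_mul_self ⟨U, hU⟩
  have hUUs : U * star U = 1 := Matrix.mem_unitaryGroup_iff.mp hU
  have hVsV : star V * V = 1 := Matrix.UnitaryGroup.star_mul_self ⟨V, hV⟩
  have hVVs : V * star V = 1 := Matrix.mem_unitaryGroup_iff.mp hV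
  have hspec : A = uconj U (fun i => ((hA.eigenvalues i : ℝ) : ℂ)) := by
    unfold uconj
    exact hA.spectral_theorem
  -- key eigenvector fact
  have K : ∀ (c : ℝ) (v : Fin d → ℂ), A *ᵥ v = (c : ℂ) • v →
      (uconj U (fun i => (f (hA.eigenvalues i) : ℂ))) *ᵥ v = (f c : ℂ) • v := by
    intro c v hv
    set w := star U *ᵥ v with hwdef
    have hw : (Matrix.diagonal (fun i => ((hA.eigenvalues i : ℝ) : ℂ))) *ᵥ w = (c : ℂ) • w := by
      have h1 := congrArg (fun x => star U *ᵥ x) hv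
      simp only [Matrix.mulVec_mulVec] at h1
      rw [Matrix.mulVec_smul] at h1
      rw [hspec] at h1
      unfold uconj at h1
      rw [show star U * (U * Matrix.diagonal (fun i => ((hA.eigenvalues i : ℝ):ℂ)) * star U)
          = Matrix.diagonal (fun i => ((hA.eigenvalues i : ℝ):ℂ)) * star U by
        rw [← Matrix.mul_assoc, ← Matrix.mul_assoc, hUsU, Matrix.one_mul]] at h1
      rw [← Matrix.mulVec_mulVec] at h1
      exact h1
    have hw' : (Matrix.diagonal (fun i => (f (hA.eigenvalues i) : ℂ))) *ᵥ w
        = (f c : ℂ) • w := by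
      funext i
      have hi := congrFun hw i
      simp only [Matrix.mulVec_diagonal, Pi.smul_apply, smul_eq_mul] at hi ⊢
      by_cases hwi : w i = 0
      · simp [hwi]
      · have hceq : ((hA.eigenvalues i : ℝ) : ℂ) = (c : ℂ) := mul_right_cancel₀ hwi hi
        have : hA.eigenvalues i = c := by exact_mod_cast hceq
        rw [this]
    unfold uconj
    rw [← Matrix.mulVec_mulVec, ← Matrix.mulVec_mulVec, ← hwdef, hw', Matrix.mulVec_smul,
      Matrix.mulVec_mulVec, hUUs, Matrix.one_mulVec]
  -- columns of V are eigenvectors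
  have hcol : ∀ j, A *ᵥ (fun i => V i j) = ((μ j : ℂ)) • (fun i => V i j) := by
    intro j
    rw [mulVec_col_eq]
    funext i
    have hAV' : A * V = V * Matrix.diagonal (fun i => (μ i : ℂ)) := by
      rw [hAV]
      unfold uconj
      rw [Matrix.mul_assoc, Matrix.mul_assoc, hVsV, Matrix.mul_one]
    rw [hAV', Matrix.mul_diagonal]
    simp [mul_comm]
  have hMV : uconj U (fun i => (f (hA.eigenvalues i) : ℂ)) * V
      = V * Matrix.diagonal (fun j => (f (μ j) : ℂ)) := by
    ext i j
    have h1 := congrFun (K (μ j) (fun i => V i j) (hcol j)) i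
    rw [mulVec_col_eq] at h1
    have h1' : ((uconj U (fun i => (f (hA.eigenvalues i) : ℂ))) * V) i j
        = (f (μ j) : ℂ) * V i j := by simpa using h1
    rw [Matrix.mul_diagonal, h1', mul_comm]
  have : uconj U (fun i => (f (hA.eigenvalues i) : ℂ)) * (V * star V)
      = V * Matrix.diagonal (fun j => (f (μ j) : ℂ)) * star V := by
    rw [← Matrix.mul_assoc, hMV]
  rw [hVVs, Matrix.mul_one] at this
  rw [this]
  rfl

lemma phi_hasDeriv (c : ℝ) (hc : 0 < c) :
    ∀ x ∈ Set.Ici (0:ℝ), HasDerivAt (fun s => Real.log (1+s) - Real.log (c+s))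
      (1/(1+x) - 1/(c+x)) x := by
  intro x hx
  have hx0 : (0:ℝ) ≤ x := hx
  have h1 : HasDerivAt (fun s : ℝ => 1 + s) 1 x := (hasDerivAt_id x).const_add 1
  have h2 : HasDerivAt (fun s : ℝ => c + s) 1 x := (hasDerivAt_id x).const_add c
  have l1 := h1.log (by positivity)
  have l2 := h2.log (by positivity)
  exact l1.sub l2

lemma phi_tendsto (c : ℝ) (hc : 0 < c) :
    Tendsto (fun s => Real.log (1+s) - Real.log (c+s)) atTop (𝓝 0) := by
  have h1 : Tendsto (fun s : ℝ => 1 + (1-c)/(c+s)) atTop (𝓝 1) := by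
    have h2 : Tendsto (fun s : ℝ => (1-c)/(c+s)) atTop (𝓝 0) := by
      have h3 : Tendsto (fun s : ℝ => c + s) atTop atTop :=
        tendsto_atTop_add_const_left _ c tendsto_id
      simpa [div_eq_mul_inv] using (tendsto_inv_atTop_zero.comp h3).const_mul (1-c)
    simpa using (tendsto_const_nhds (x := (1:ℝ))).add h2
  have h4 : Tendsto (fun s : ℝ => Real.log (1 + (1-c)/(c+s))) atTop (𝓝 0) := by
    have := (Real.continuousAt_log (x := 1) one_ne_zero).tendsto.comp h1
    simpa [Function.comp_def] using this
  refine h4.congr' ?_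
  filter_upwards [eventually_gt_atTop (0:ℝ)] with s hs
  have hc1 : c + s > 0 := by positivity
  have h1s : 1 + s > 0 := by positivity
  rw [show 1 + (1-c)/(c+s) = (1+s)/(c+s) by field_simp; ring]
  rw [Real.log_div h1s.ne' hc1.ne']

lemma phi_integrableOn (c : ℝ) (hc : 0 < c) :
    IntegrableOn (fun s => 1/(1+s) - 1/(c+s)) (Set.Ioi (0:ℝ)) := by
  have hderiv := phi_hasDeriv c hc
  have htend := phi_tendsto c hc
  rcases le_total 1 c with h1c | h1c
  · refine integrableOn_Ioi_deriv_of_nonneg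
      ((hderiv 0 Set.self_mem_Ici).continuousAt.continuousWithinAt)
      (fun x hx => hderiv x (Set.mem_Ici.mpr (le_of_lt hx))) (fun x hx => ?_) htend
    have hx : (0:ℝ) < x := hx
    have : (0:ℝ) < 1 + x := by positivity
    have h2 : 1 + x ≤ c + x := by linarith
    simp only [sub_nonneg]
    exact one_div_le_one_div_of_le this h2
  · have hneg : IntegrableOn (fun s => -(1/(1+s) - 1/(c+s))) (Set.Ioi (0:ℝ)) := by
      refine integrableOn_Ioi_deriv_of_nonneg
        (((hderiv 0 Set.self_mem_Ici).neg).continuousAt.continuousWithinAt)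
        (fun x hx => (hderiv x (Set.mem_Ici.mpr (le_of_lt hx))).neg) (fun x hx => ?_) (htend.neg.congr (by simp))
      have hx : (0:ℝ) < x := hx
      have hcx : (0:ℝ) < c + x := by positivity
      have h2 : c + x ≤ 1 + x := by linarith
      simp only [neg_sub, sub_nonneg]
      exact one_div_le_one_div_of_le hcx h2
    have h2 := hneg.neg
    refine h2.congr (Filter.Eventually.of_forall fun s => ?_)
    simp

lemma phi_integral (c : ℝ) (hc : 0 < c) :
    ∫ s in Set.Ioi (0:ℝ), (1/(1+s) - 1/(c+s)) = Real.log c := by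
  have := integral_Ioi_of_hasDerivAt_of_tendsto
    ((phi_hasDeriv c hc 0 Set.self_mem_Ici).continuousAt.continuousWithinAt)
    (fun x hx => phi_hasDeriv c hc x (Set.mem_Ici.mpr (le_of_lt hx))) (phi_integrableOn c hc) (phi_tendsto c hc)
  simpa using this

lemma psd_smul {M : Matrix (Fin d) (Fin d) ℂ} (hM : M.PosSemidef) {r : ℝ} (hr : 0 ≤ r) :
    (r • M).PosSemidef := by
  refine Matrix.PosSemidef.of_dotProduct_mulVec_nonneg ?_ ?_
  · ext i j
    have hM1 := congrFun (congrFun hM.1 i) j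
    simp only [Matrix.conjTranspose_apply] at hM1 ⊢
    simp only [Matrix.smul_apply, Complex.real_smul, star_mul', ← hM1]
    simp [Complex.conj_ofReal, mul_comm]
  · intro x
    have h := hM.dotProduct_mulVec_nonneg x
    rw [Matrix.smul_mulVec, dotProduct_smul]
    obtain ⟨h1, h2⟩ := Complex.le_def.mp h
    rw [Complex.le_def]
    constructor
    · simp only [Complex.real_smul, Complex.mul_re, Complex.ofReal_re, Complex.ofReal_im,
        Complex.zero_re] at h1 ⊢
      nlinarith
    · simp only [Complex.real_smul, Complex.mul_im, Complex.ofReal_re, Complex.ofReal_im,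
        Complex.zero_im] at h2 ⊢
      simp [← h2]

lemma mlog_eq_uconj {A : Matrix (Fin d) (Fin d) ℂ} (hA : A.IsHermitian) :
    mlog A = uconj (hA.eigenvectorUnitary : Matrix (Fin d) (Fin d) ℂ)
      (fun i => (Real.log (hA.eigenvalues i) : ℂ)) := by
  rw [mlog, dif_pos hA]
  rfl

lemma relEntropy_bounds (a : ℝ) (ha0 : 0 < a) (ha1 : a < 1)
    (ρ σ : Matrix (Fin d) (Fin d) ℂ) (hρ : IsDensity ρ) (hσ : IsDensity σ) :
    0 ≤ relEntropy ρ (a • ρ + (1 - a) • σ) ∧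
      relEntropy ρ (a • ρ + (1 - a) • σ) ≤ -Real.log a := by
  have ha1' : (0:ℝ) ≤ 1 - a := by linarith
  set τ : Matrix (Fin d) (Fin d) ℂ := a • ρ + (1 - a) • σ with hτdef
  have hρpsd := hρ.1
  have hσpsd := hσ.1
  have hτpsd : τ.PosSemidef := (psd_smul hρpsd ha0.le).add (psd_smul hσpsd ha1')
  have hτtr : τ.trace = 1 := by
    rw [hτdef, Matrix.trace_add, Matrix.trace_smul, Matrix.trace_smul, hρ.2, hσ.2]
    simp [Complex.real_smul]
  set U : Matrix (Fin d) (Fin d) ℂ := (hρpsd.1.eigenvectorUnitary : Matrix (Fin d) (Fin d) ℂ)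
    with hUdef
  set V : Matrix (Fin d) (Fin d) ℂ := (hτpsd.1.eigenvectorUnitary : Matrix (Fin d) (Fin d) ℂ)
    with hVdef
  set p : Fin d → ℝ := hρpsd.1.eigenvalues with hpdef
  set q : Fin d → ℝ := hτpsd.1.eigenvalues with hqdef
  have hU : U ∈ Matrix.unitaryGroup (Fin d) ℂ := (hρpsd.1.eigenvectorUnitary).2
  have hV : V ∈ Matrix.unitaryGroup (Fin d) ℂ := (hτpsd.1.eigenvectorUnitary).2
  set t : Fin d → ℝ := fun j => ((star V * ρ * V) j j).re with htdef
  set s : Fin d → ℝ := fun j => ((star V * σ * V) j j).re with hsdef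
  have hp0 : ∀ i, 0 ≤ p i := hρpsd.eigenvalues_nonneg
  have hq0 : ∀ j, 0 ≤ q j := hτpsd.eigenvalues_nonneg
  have ht0 : ∀ j, 0 ≤ t j := conj_entry_nonneg hρpsd V
  have hs0 : ∀ j, 0 ≤ s j := conj_entry_nonneg hσpsd V
  have hdiagU : star U * ρ * U = Matrix.diagonal (fun i => (p i : ℂ)) := by
    have := hρpsd.1.conjStarAlgAut_star_eigenvectorUnitary
    rw [Unitary.conjStarAlgAut_star_apply] at this
    exact this
  have hdiagV : star V * τ * V = Matrix.diagonal (fun j => (q j : ℂ)) := by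
    have := hτpsd.1.conjStarAlgAut_star_eigenvectorUnitary
    rw [Unitary.conjStarAlgAut_star_apply] at this
    exact this
  have hUentry : ∀ i, ((star U * ρ * U) i i).re = p i := by
    intro i
    rw [hdiagU]
    simp
  have hVentry : ∀ j, ((star V * τ * V) j j).re = q j := by
    intro j
    rw [hdiagV]
    simp
  have hspecρ : ρ = uconj U (fun i => (p i : ℂ)) := by
    unfold uconj
    exact hρpsd.1.spectral_theorem
  have hspecτ : τ = uconj V (fun j => (q j : ℂ)) := by
    unfold uconj
    exact hτpsd.1.spectral_theorem
  have hps : ∑ i, p i = 1 := by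
    have h1 : ∑ i, ((star U * ρ * U) i i).re = (Matrix.trace ρ).re := sum_conj_diag_re hU
    rw [hρ.2] at h1
    simp only [hUentry] at h1
    simpa using h1
  have hts : ∑ j, t j = 1 := by
    have h1 : ∑ j, ((star V * ρ * V) j j).re = (Matrix.trace ρ).re := sum_conj_diag_re hV
    rw [hρ.2] at h1
    simpa using h1
  have hqs : ∑ j, q j = 1 := by
    have h1 : ∑ j, ((star V * τ * V) j j).re = (Matrix.trace τ).re := sum_conj_diag_re hV
    rw [hτtr] at h1
    simp only [hVentry] at h1
    simpa using h1
  -- q j = a t j + (1-a) s j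
  have hqts : ∀ j, q j = a * t j + (1 - a) * s j := by
    intro j
    have h1 : star V * τ * V = a • (star V * ρ * V) + (1 - a) • (star V * σ * V) := by
      rw [hτdef]
      simp only [Matrix.mul_add, Matrix.add_mul, Matrix.mul_smul, Matrix.smul_mul]
    have h2 := hVentry j
    rw [h1] at h2
    simp only [Matrix.add_apply, Matrix.smul_apply, Complex.add_re, Complex.real_smul,
      Complex.mul_re, Complex.ofReal_re, Complex.ofReal_im] at h2
    rw [← h2, htdef, hsdef]
    ring
  have hat : ∀ j, a * t j ≤ q j := by
    intro j
    have := hqts j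
    nlinarith [hs0 j]
  have hq0t : ∀ j, q j = 0 → t j = 0 := by
    intro j hj
    have h1 := hat j
    rw [hj] at h1
    nlinarith [ht0 j]
  -- relEntropy formula
  have hre : relEntropy ρ τ = ∑ i, p i * Real.log (p i) - ∑ j, t j * Real.log (q j) := by
    unfold relEntropy
    rw [Matrix.mul_sub, Matrix.trace_sub, Complex.sub_re,
      mlog_eq_uconj hρpsd.1, mlog_eq_uconj hτpsd.1]
    rw [re_trace_mul_uconj, re_trace_mul_uconj]
    congr 1
    · exact Finset.sum_congr rfl fun i _ => by rw [hUentry]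
  -- Klein inequality (lower bound)
  have hW : ∀ X : Matrix (Fin d) (Fin d) ℂ, True := fun _ => trivial
  set W : Matrix (Fin d) (Fin d) ℂ := star U * V with hWdef
  have hUsU : star U * U = 1 := Matrix.UnitaryGroup.star_mul_self ⟨U, hU⟩
  have hUUs : U * star U = 1 := Matrix.mem_unitaryGroup_iff.mp hU
  have hVsV : star V * V = 1 := Matrix.UnitaryGroup.star_mul_self ⟨V, hV⟩
  have hVVs : V * star V = 1 := Matrix.mem_unitaryGroup_iff.mp hV
  have hstarW : star W = star V * U := by rw [hWdef, StarMul.star_mul, star_star]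
  have hWWs : W * star W = 1 := by
    rw [hWdef, hstarW, Matrix.mul_assoc, ← Matrix.mul_assoc V (star V) U, hVVs,
      Matrix.one_mul, hUsU]
  have hWsW : star W * W = 1 := by
    rw [hWdef, hstarW, Matrix.mul_assoc, ← Matrix.mul_assoc U (star U) V, hUUs,
      Matrix.one_mul, hVsV]
  set c : Fin d → Fin d → ℝ := fun i j => Complex.normSq (W i j) with hcdef
  have hc0 : ∀ i j, 0 ≤ c i j := fun i j => Complex.normSq_nonneg _
  have hrow : ∀ i, ∑ j, c i j = 1 := by
    intro i
    have h1 := congrFun (congrFun hWWs i) i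
    simp only [Matrix.mul_apply, Matrix.star_eq_conjTranspose, Matrix.conjTranspose_apply,
      Matrix.one_apply_eq] at h1
    have h2 : ∀ j : Fin d, W i j * star (W i j) = ((c i j : ℝ) : ℂ) := by
      intro j
      rw [hcdef]
      exact Complex.mul_conj _
    rw [Finset.sum_congr rfl fun j _ => h2 j] at h1
    have := congrArg Complex.re h1
    simpa [Complex.re_sum] using this
  have hcol : ∀ j, ∑ i, c i j = 1 := by
    intro j
    have h1 := congrFun (congrFun hWsW j) j
    simp only [Matrix.mul_apply, Matrix.star_eq_conjTranspose, Matrix.conjTranspose_apply,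
      Matrix.one_apply_eq] at h1
    have h2 : ∀ i : Fin d, star (W i j) * W i j = ((c i j : ℝ) : ℂ) := by
      intro i
      rw [hcdef, mul_comm]
      exact Complex.mul_conj _
    rw [Finset.sum_congr rfl fun i _ => h2 i] at h1
    have := congrArg Complex.re h1
    simpa [Complex.re_sum] using this
  have htc : ∀ j, t j = ∑ i, p i * c i j := by
    intro j
    have h1 : star V * ρ * V = star W * Matrix.diagonal (fun i => (p i : ℂ)) * W := by
      rw [hstarW, hWdef, hspecρ]
      unfold uconj
      simp only [Matrix.mul_assoc]
    have h2 : (star W * Matrix.diagonal (fun i => (p i : ℂ)) * W) j j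
        = ∑ i, star (W i j) * (p i : ℂ) * W i j := by
      rw [Matrix.mul_apply]
      refine Finset.sum_congr rfl fun i _ => ?_
      rw [Matrix.mul_diagonal, Matrix.star_apply]
    have h3 : t j = ((star W * Matrix.diagonal (fun i => (p i : ℂ)) * W) j j).re := by
      rw [htdef]
      simp only []
      rw [h1]
    rw [h3, h2, Complex.re_sum]
    refine Finset.sum_congr rfl fun i _ => ?_
    rw [show star (W i j) * (p i:ℂ) * W i j = (p i:ℂ) * (W i j * star (W i j)) from by ring]
    rw [show W i j * star (W i j) = ((c i j : ℝ):ℂ) from by rw [hcdef]; exact Complex.mul_conj _]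
    rw [← Complex.ofReal_mul, Complex.ofReal_re]
  have hKlowTerm : ∀ i j, c i j * p i - c i j * q j
      ≤ c i j * (p i * Real.log (p i)) - c i j * (p i * Real.log (q j)) := by
    intro i j
    rcases eq_or_lt_of_le (hp0 i) with hpi | hpi
    · rw [← hpi]
      simp only [mul_zero, zero_mul, sub_zero, zero_sub, sub_zero]
      nlinarith [hc0 i j, hq0 j]
    · rcases eq_or_lt_of_le (hq0 j) with hqj | hqj
      · have htj : t j = 0 := hq0t j hqj.symm
        have hsum0 : ∑ i, p i * c i j = 0 := by rw [← htc j]; exact htj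
        have hpc : p i * c i j = 0 :=
          (Finset.sum_eq_zero_iff_of_nonneg
            (fun k _ => mul_nonneg (hp0 k) (hc0 k j))).mp hsum0 i (Finset.mem_univ i)
        have hcij : c i j = 0 := by
          rcases mul_eq_zero.mp hpc with h | h
          · exact absurd h hpi.ne'
          · exact h
        simp [hcij]
      · have hlog := Real.log_le_sub_one_of_pos (show 0 < q j / p i by positivity)
        rw [Real.log_div hqj.ne' hpi.ne'] at hlog
        have h3 : p i * (Real.log (q j) - Real.log (p i)) ≤ q j - p i := by
          calc p i * (Real.log (q j) - Real.log (p i))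
              ≤ p i * (q j / p i - 1) := mul_le_mul_of_nonneg_left hlog hpi.le
            _ = q j - p i := by field_simp
        have h4 := mul_le_mul_of_nonneg_left h3 (hc0 i j)
        nlinarith [h4]
  have hKlow : 0 ≤ ∑ i, p i * Real.log (p i) - ∑ j, t j * Real.log (q j) := by
    have e1 : ∑ i, p i * Real.log (p i) = ∑ i, ∑ j, c i j * (p i * Real.log (p i)) := by
      refine Finset.sum_congr rfl fun i _ => ?_
      rw [← Finset.sum_mul, hrow i, one_mul]
    have e2 : ∑ j, t j * Real.log (q j) = ∑ i, ∑ j, c i j * (p i * Real.log (q j)) := by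
      rw [Finset.sum_comm]
      refine Finset.sum_congr rfl fun j _ => ?_
      rw [htc j, Finset.sum_mul]
      refine Finset.sum_congr rfl fun i _ => ?_
      ring
    have hS : ∑ i, p i * Real.log (p i) - ∑ j, t j * Real.log (q j)
        = ∑ i, ∑ j, (c i j * (p i * Real.log (p i)) - c i j * (p i * Real.log (q j))) := by
      rw [e1, e2, ← Finset.sum_sub_distrib]
      exact Finset.sum_congr rfl fun i _ => (Finset.sum_sub_distrib _ _).symm
    have z1 : ∑ i, ∑ j, (c i j * p i - c i j * q j)
        = (∑ i, ∑ j, c i j * p i) - ∑ i, ∑ j, c i j * q j := by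
      rw [← Finset.sum_sub_distrib]
      exact Finset.sum_congr rfl fun i _ => Finset.sum_sub_distrib _ _
    have z2 : ∑ i, ∑ j, c i j * p i = 1 := by
      rw [show (∑ i, ∑ j, c i j * p i) = ∑ i, (∑ j, c i j) * p i from
        Finset.sum_congr rfl fun i _ => by rw [Finset.sum_mul]]
      simp only [hrow, one_mul]
      exact hps
    have z3 : ∑ i, ∑ j, c i j * q j = 1 := by
      rw [Finset.sum_comm]
      rw [show (∑ j, ∑ i, c i j * q j) = ∑ j, (∑ i, c i j) * q j from
        Finset.sum_congr rfl fun j _ => by rw [Finset.sum_mul]]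
      simp only [hcol, one_mul]
      exact hqs
    have hlb : ∑ i, ∑ j, (c i j * p i - c i j * q j)
        ≤ ∑ i, ∑ j, (c i j * (p i * Real.log (p i)) - c i j * (p i * Real.log (q j))) :=
      Finset.sum_le_sum fun i _ => Finset.sum_le_sum fun j _ => hKlowTerm i j
    rw [hS]
    calc (0:ℝ) = ∑ i, ∑ j, (c i j * p i - c i j * q j) := by rw [z1, z2, z3]; ring
      _ ≤ _ := hlb
  -- Upper bound
  have hAδ : ∀ δ : ℝ, a • ρ + δ • (1 : Matrix (Fin d) (Fin d) ℂ)
      = uconj U (fun i => ((a * p i + δ : ℝ) : ℂ)) := by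
    intro δ
    conv_lhs => rw [hspecρ]
    rw [smul_uconj, smul_one_eq_uconj hU δ, uconj_add,
      show ((fun i => ((a * p i : ℝ) : ℂ)) + fun _ : Fin d => ((δ : ℝ) : ℂ))
          = fun i => ((a * p i + δ : ℝ) : ℂ) from by
        funext i
        show ((a * p i : ℝ) : ℂ) + ((δ : ℝ) : ℂ) = _
        push_cast
        ring]
  have hBδ : ∀ δ : ℝ, τ + δ • (1 : Matrix (Fin d) (Fin d) ℂ)
      = uconj V (fun j => ((q j + δ : ℝ) : ℂ)) := by
    intro δ
    conv_lhs => rw [hspecτ]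
    rw [smul_one_eq_uconj hV δ, uconj_add,
      show ((fun j => ((q j : ℝ) : ℂ)) + fun _ : Fin d => ((δ : ℝ) : ℂ))
          = fun j => ((q j + δ : ℝ) : ℂ) from by
        funext j
        show ((q j : ℝ) : ℂ) + ((δ : ℝ) : ℂ) = _
        push_cast
        ring]
  have core : ∀ ε : ℝ, 0 < ε →
      ∑ i, p i * Real.log (a * p i + ε) ≤ ∑ j, t j * Real.log (q j + ε) := by
    intro ε hε
    have hcP : ∀ i, 0 < a * p i + ε := fun i => by nlinarith [hp0 i]
    have hcQ : ∀ j, 0 < q j + ε := fun j => by nlinarith [hq0 j]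
    have hpt : ∀ x : ℝ, 0 < x →
        ∑ j, t j * (1/((q j + ε) + x)) ≤ ∑ i, p i * (1/((a * p i + ε) + x)) := by
      intro x hx
      set δ := ε + x with hδdef
      have hPpos : ∀ i, 0 < a * p i + δ := fun i => by nlinarith [hp0 i]
      have hQpos : ∀ j, 0 < q j + δ := fun j => by nlinarith [hq0 j]
      set P : Matrix (Fin d) (Fin d) ℂ := uconj U (fun i => ((a * p i + δ : ℝ) : ℂ)) with hPd
      set P' : Matrix (Fin d) (Fin d) ℂ :=
        uconj U (fun i => (((a * p i + δ)⁻¹ : ℝ) : ℂ)) with hP'd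
      set Q : Matrix (Fin d) (Fin d) ℂ := uconj V (fun j => ((q j + δ : ℝ) : ℂ)) with hQd
      set Q' : Matrix (Fin d) (Fin d) ℂ :=
        uconj V (fun j => (((q j + δ)⁻¹ : ℝ) : ℂ)) with hQ'd
      have hfP : ((fun i => ((a * p i + δ : ℝ) : ℂ)) * fun i => (((a * p i + δ)⁻¹ : ℝ) : ℂ))
          = 1 := by
        funext i
        show ((a * p i + δ : ℝ) : ℂ) * (((a * p i + δ)⁻¹ : ℝ) : ℂ) = 1
        rw [← Complex.ofReal_mul, mul_inv_cancel₀ (hPpos i).ne', Complex.ofReal_one]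
      have hfP' : ((fun i => (((a * p i + δ)⁻¹ : ℝ) : ℂ)) * fun i => ((a * p i + δ : ℝ) : ℂ))
          = 1 := by
        rw [mul_comm]
        exact hfP
      have hfQ : ((fun j => ((q j + δ : ℝ) : ℂ)) * fun j => (((q j + δ)⁻¹ : ℝ) : ℂ)) = 1 := by
        funext j
        show ((q j + δ : ℝ) : ℂ) * (((q j + δ)⁻¹ : ℝ) : ℂ) = 1
        rw [← Complex.ofReal_mul, mul_inv_cancel₀ (hQpos j).ne', Complex.ofReal_one]
      have hfQ' : ((fun j => (((q j + δ)⁻¹ : ℝ) : ℂ)) * fun j => ((q j + δ : ℝ) : ℂ)) = 1 := by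
        rw [mul_comm]
        exact hfQ
      have hPP' : P * P' = 1 := by rw [hPd, hP'd, uconj_mul hU, hfP, uconj_one hU]
      have hP'P : P' * P = 1 := by rw [hPd, hP'd, uconj_mul hU, hfP', uconj_one hU]
      have hQQ' : Q * Q' = 1 := by rw [hQd, hQ'd, uconj_mul hV, hfQ, uconj_one hV]
      have hQ'Q : Q' * Q = 1 := by rw [hQd, hQ'd, uconj_mul hV, hfQ', uconj_one hV]
      have hΔ : (Q - P).PosSemidef := by
        have e : Q - P = (1 - a) • σ := by
          rw [hPd, hQd, ← hAδ δ, ← hBδ δ, hτdef]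
          abel
        rw [e]
        exact psd_smul hσpsd ha1'
      have hP'psd : P'.PosSemidef :=
        uconj_posSemidef _ (fun i => (inv_nonneg.mpr (hPpos i).le))
      have hQ'psd : Q'.PosSemidef :=
        uconj_posSemidef _ (fun j => (inv_nonneg.mpr (hQpos j).le))
      have hdiff : (P' - Q').PosSemidef :=
        inv_sub_inv_psd hP'psd hQ'psd hP'P hQQ' hQ'Q hPP' hΔ
      have htr : 0 ≤ (Matrix.trace (ρ * (P' - Q'))).re := re_trace_mul_psd hρpsd hdiff
      rw [Matrix.mul_sub, Matrix.trace_sub, Complex.sub_re] at htr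
      have h5 : (Matrix.trace (ρ * P')).re = ∑ i, p i * (a * p i + δ)⁻¹ := by
        rw [hP'd, re_trace_mul_uconj]
        exact Finset.sum_congr rfl fun i _ => by rw [hUentry]
      have h6 : (Matrix.trace (ρ * Q')).re = ∑ j, t j * (q j + δ)⁻¹ := by
        rw [hQ'd, re_trace_mul_uconj]
      rw [h5, h6] at htr
      have e7 : ∀ j, t j * (1/((q j + ε) + x)) = t j * (q j + δ)⁻¹ := by
        intro j
        rw [one_div, hδdef, add_assoc]
      have e8 : ∀ i, p i * (1/((a * p i + ε) + x)) = p i * (a * p i + δ)⁻¹ := by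
        intro i
        rw [one_div, hδdef, add_assoc]
      rw [Finset.sum_congr rfl fun j _ => e7 j, Finset.sum_congr rfl fun i _ => e8 i]
      linarith
    -- integration
    have hFPint : ∀ i : Fin d, IntegrableOn
        (fun x => p i * (1/(1+x) - 1/((a * p i + ε) + x))) (Set.Ioi (0:ℝ)) :=
      fun i => (phi_integrableOn _ (hcP i)).const_mul (p i)
    have hFQint : ∀ j : Fin d, IntegrableOn
        (fun x => t j * (1/(1+x) - 1/((q j + ε) + x))) (Set.Ioi (0:ℝ)) :=
      fun j => (phi_integrableOn _ (hcQ j)).const_mul (t j)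
    have hFPint' : IntegrableOn
        (fun x => ∑ i, p i * (1/(1+x) - 1/((a * p i + ε) + x))) (Set.Ioi (0:ℝ)) :=
      MeasureTheory.integrable_finset_sum _ fun i _ => hFPint i
    have hFQint' : IntegrableOn
        (fun x => ∑ j, t j * (1/(1+x) - 1/((q j + ε) + x))) (Set.Ioi (0:ℝ)) :=
      MeasureTheory.integrable_finset_sum _ fun j _ => hFQint j
    have hFP : ∫ x in Set.Ioi (0:ℝ), (∑ i, p i * (1/(1+x) - 1/((a * p i + ε) + x)))
        = ∑ i, p i * Real.log (a * p i + ε) := by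
      rw [MeasureTheory.integral_finset_sum _ fun i _ => hFPint i]
      refine Finset.sum_congr rfl fun i _ => ?_
      rw [MeasureTheory.integral_const_mul, phi_integral _ (hcP i)]
    have hFQ : ∫ x in Set.Ioi (0:ℝ), (∑ j, t j * (1/(1+x) - 1/((q j + ε) + x)))
        = ∑ j, t j * Real.log (q j + ε) := by
      rw [MeasureTheory.integral_finset_sum _ fun j _ => hFQint j]
      refine Finset.sum_congr rfl fun j _ => ?_
      rw [MeasureTheory.integral_const_mul, phi_integral _ (hcQ j)]
    have hnn : 0 ≤ ∫ x in Set.Ioi (0:ℝ),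
        ((∑ j, t j * (1/(1+x) - 1/((q j + ε) + x)))
          - ∑ i, p i * (1/(1+x) - 1/((a * p i + ε) + x))) := by
      refine MeasureTheory.setIntegral_nonneg measurableSet_Ioi fun x hx => ?_
      have hx : (0:ℝ) < x := hx
      have eF : (∑ j, t j * (1/(1+x) - 1/((q j + ε) + x)))
            - ∑ i, p i * (1/(1+x) - 1/((a * p i + ε) + x))
          = (∑ i, p i * (1/((a * p i + ε) + x))) - ∑ j, t j * (1/((q j + ε) + x)) := by
        simp only [mul_sub]
        rw [Finset.sum_sub_distrib, Finset.sum_sub_distrib, ← Finset.sum_mul, ← Finset.sum_mul,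
          hts, hps]
        ring
      rw [eF, sub_nonneg]
      exact hpt x hx
    rw [MeasureTheory.integral_sub hFQint' hFPint', hFQ, hFP, sub_nonneg] at hnn
    exact hnn
  -- limits as ε → 0⁺
  have hlim1 : Tendsto (fun ε : ℝ => ∑ i, p i * Real.log (a * p i + ε)) (𝓝[>] (0:ℝ))
      (𝓝 (∑ i, p i * Real.log (a * p i))) := by
    refine tendsto_finset_sum _ fun i _ => ?_
    by_cases hpi : p i = 0
    · simpa [hpi] using (tendsto_const_nhds : Tendsto (fun _ : ℝ => (0:ℝ)) (𝓝[>] 0) (𝓝 0))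
    · have hppos : 0 < p i := lt_of_le_of_ne (hp0 i) (Ne.symm hpi)
      have h1 : Tendsto (fun ε : ℝ => a * p i + ε) (𝓝[>] 0) (𝓝 (a * p i)) := by
        have h2 : Tendsto (fun ε : ℝ => a * p i + ε) (𝓝 0) (𝓝 (a * p i + 0)) :=
          (continuous_const.add continuous_id).tendsto 0
        rw [add_zero] at h2
        exact h2.mono_left nhdsWithin_le_nhds
      have h2 : ContinuousAt Real.log (a * p i) :=
        Real.continuousAt_log (by positivity)
      exact (h2.tendsto.comp h1).const_mul (p i)
  have hlim2 : Tendsto (fun ε : ℝ => ∑ j, t j * Real.log (q j + ε)) (𝓝[>] (0:ℝ))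
      (𝓝 (∑ j, t j * Real.log (q j))) := by
    refine tendsto_finset_sum _ fun j _ => ?_
    by_cases hqj : q j = 0
    · have htj : t j = 0 := hq0t j hqj
      simpa [htj] using (tendsto_const_nhds : Tendsto (fun _ : ℝ => (0:ℝ)) (𝓝[>] 0) (𝓝 0))
    · have hqpos : 0 < q j := lt_of_le_of_ne (hq0 j) (Ne.symm hqj)
      have h1 : Tendsto (fun ε : ℝ => q j + ε) (𝓝[>] 0) (𝓝 (q j)) := by
        have h2 : Tendsto (fun ε : ℝ => q j + ε) (𝓝 0) (𝓝 (q j + 0)) :=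
          (continuous_const.add continuous_id).tendsto 0
        rw [add_zero] at h2
        exact h2.mono_left nhdsWithin_le_nhds
      have h2 : ContinuousAt Real.log (q j) := Real.continuousAt_log hqpos.ne'
      exact (h2.tendsto.comp h1).const_mul (t j)
  have hval : ∑ i, p i * Real.log (a * p i) = Real.log a + ∑ i, p i * Real.log (p i) := by
    have h1 : ∀ i, p i * Real.log (a * p i) = p i * Real.log a + p i * Real.log (p i) := by
      intro i
      by_cases hpi : p i = 0
      · simp [hpi]
      · rw [Real.log_mul ha0.ne' hpi]
        ring
    rw [Finset.sum_congr rfl fun i _ => h1 i, Finset.sum_add_distrib, ← Finset.sum_mul, hps,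
      one_mul]
  have hev : ∀ᶠ ε in 𝓝[>] (0:ℝ), (fun ε : ℝ => ∑ i, p i * Real.log (a * p i + ε)) ε
      ≤ (fun ε : ℝ => ∑ j, t j * Real.log (q j + ε)) ε := by
    filter_upwards [self_mem_nhdsWithin] with ε hε
    exact core ε hε
  have hupper : ∑ i, p i * Real.log (a * p i) ≤ ∑ j, t j * Real.log (q j) :=
    le_of_tendsto_of_tendsto hlim1 hlim2 hev
  rw [hval] at hupper
  constructor
  · rw [hre]
    exact hKlow
  · rw [hre]
    linarith

theorem tre_nonneg_le_one {d : ℕ} (a : ℝ) (ha : a ∈ Set.Ioo (0:ℝ) 1)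
    (ρ σ : Matrix (Fin d) (Fin d) ℂ) (hρ : IsDensity ρ) (hσ : IsDensity σ) :
    0 ≤ tre a ρ σ ∧ tre a ρ σ ≤ 1 := by
  obtain ⟨ha0, ha1⟩ := ha
  have h := relEntropy_bounds a ha0 ha1 ρ σ hρ hσ
  have hloga : 0 < -Real.log a := by
    have := Real.log_neg ha0 ha1
    linarith
  unfold tre
  constructor
  · exact div_nonneg h.1 hloga.le
  · rw [div_le_one hloga]
    exact h.2
end

section
/- For a positive definite operator A and any self-adjoint operator Δ on a finite-dimensional Hilbert space, Tr(Δ T_A(Δ)) ≥ 0, where T_A(Δ) = ∫₀^∞ (A+sI)^{-1} Δ (A+sI)^{-1} ds. -/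
open Matrix MeasureTheory Real Filter
open scoped ComplexOrder

open MeasureTheory in
private lemma aux_int_real {a b : ℝ} (ha : 0 < a) (hb : 0 < b) :
    IntegrableOn (fun s : ℝ => ((a + s) * (b + s))⁻¹) (Set.Ioi 0) := by
  have hc0 : 0 < min a b := lt_min ha hb
  set c := min a b with hcdef
  have hmaj : IntegrableOn (fun s : ℝ => ((c + s) ^ 2)⁻¹) (Set.Ioi 0) := by
    have h1 : ∀ x ∈ Set.Ioi (0:ℝ), HasDerivAt (fun s : ℝ => -(c + s)⁻¹) (((c + x) ^ 2)⁻¹) x := by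
      intro x hx
      have hx0 : (0:ℝ) < x := hx
      have hne : c + x ≠ 0 := by positivity
      have h := (((hasDerivAt_id x).const_add c).inv hne).neg
      convert h using 1
      · rfl
      · rfl
      · rfl
      · simp only [id]; ring
    have hcont : ContinuousWithinAt (fun s : ℝ => -(c + s)⁻¹) (Set.Ici 0) 0 := by
      have : ContinuousOn (fun s : ℝ => -(c + s)⁻¹) (Set.Ici 0) := by
        refine ContinuousOn.neg (ContinuousOn.inv₀ ?_ ?_)
        · exact (continuous_const.add continuous_id).continuousOn
        · intro x hx
          exact (add_pos_of_pos_of_nonneg hc0 hx).ne'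
      exact this 0 (Set.self_mem_Ici)
    have hlim : Filter.Tendsto (fun s : ℝ => -(c + s)⁻¹) Filter.atTop (nhds 0) := by
      have h2 : Filter.Tendsto (fun s : ℝ => (c + s)) Filter.atTop Filter.atTop :=
        Filter.tendsto_atTop_add_const_left _ c Filter.tendsto_id
      simpa using (Filter.Tendsto.comp tendsto_inv_atTop_zero h2).neg
    exact integrableOn_Ioi_deriv_of_nonneg hcont h1 (fun x hx => by
      have : (0:ℝ) < x := hx; positivity) hlim
  have hcont : ContinuousOn (fun s : ℝ => ((a + s) * (b + s))⁻¹) (Set.Ioi 0) := by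
    refine ContinuousOn.inv₀ ?_ ?_
    · exact ((continuous_const.add continuous_id).mul
        (continuous_const.add continuous_id)).continuousOn
    · intro x hx
      have : (0:ℝ) < x := hx
      positivity
  refine hmaj.mono' (hcont.aestronglyMeasurable measurableSet_Ioi) ?_
  filter_upwards [ae_restrict_mem measurableSet_Ioi] with s hs
  have hs0 : (0:ℝ) < s := hs
  have hca : c ≤ a := min_le_left a b
  have hcb : c ≤ b := min_le_right a b
  have h1 : (c + s) ^ 2 ≤ (a + s) * (b + s) := by nlinarith
  rw [Real.norm_eq_abs, abs_of_nonneg (by positivity)]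
  exact inv_anti₀ (by positivity) h1

open MeasureTheory in
private lemma aux_int_complex {a b : ℝ} (ha : 0 < a) (hb : 0 < b) :
    IntegrableOn (fun s : ℝ => ((a + s : ℝ) : ℂ)⁻¹ * ((b + s : ℝ) : ℂ)⁻¹) (Set.Ioi 0) := by
  have hcont : ContinuousOn (fun s : ℝ => ((a + s : ℝ) : ℂ)⁻¹ * ((b + s : ℝ) : ℂ)⁻¹)
      (Set.Ioi 0) := by
    refine ContinuousOn.mul (ContinuousOn.inv₀ ?_ ?_) (ContinuousOn.inv₀ ?_ ?_)
    · exact (Complex.continuous_ofReal.comp (continuous_const.add continuous_id)).continuousOn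
    · intro x hx
      have : (0:ℝ) < x := hx
      exact Complex.ofReal_ne_zero.mpr (by positivity)
    · exact (Complex.continuous_ofReal.comp (continuous_const.add continuous_id)).continuousOn
    · intro x hx
      have : (0:ℝ) < x := hx
      exact Complex.ofReal_ne_zero.mpr (by positivity)
  refine (aux_int_real ha hb).mono' (hcont.aestronglyMeasurable measurableSet_Ioi) ?_
  filter_upwards [ae_restrict_mem measurableSet_Ioi] with s hs
  have hs0 : (0:ℝ) < s := hs
  rw [norm_mul, norm_inv, norm_inv, Complex.norm_real, Complex.norm_real,
    Real.norm_eq_abs, Real.norm_eq_abs, abs_of_pos (by positivity), abs_of_pos (by positivity),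
    ← mul_inv]


open MeasureTheory in
theorem Tmap_trace_nonneg {d : ℕ} (A Δ : Matrix (Fin d) (Fin d) ℂ) (hA : A.PosDef)
    (hΔ : Δ.IsHermitian) :
    0 ≤ (Matrix.trace (Δ * Tmap A Δ)).re := by
  classical
  have hH : A.IsHermitian := hA.1
  set U : Matrix (Fin d) (Fin d) ℂ := (hH.eigenvectorUnitary : Matrix (Fin d) (Fin d) ℂ)
    with hUdef
  have hU1 : U * star U = 1 := Matrix.mem_unitaryGroup_iff.mp hH.eigenvectorUnitary.2
  have hU2 : star U * U = 1 := Matrix.mem_unitaryGroup_iff'.mp hH.eigenvectorUnitary.2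
  set lam : Fin d → ℝ := hH.eigenvalues with hlamdef
  have hlam_pos : ∀ k, 0 < lam k := fun k => hA.eigenvalues_pos k
  set Δ' : Matrix (Fin d) (Fin d) ℂ := star U * Δ * U with hΔ'def
  have hΔ'h : Δ'.IsHermitian := by
    rw [hΔ'def, Matrix.IsHermitian, Matrix.star_eq_conjTranspose,
      Matrix.conjTranspose_mul, Matrix.conjTranspose_mul, Matrix.conjTranspose_conjTranspose,
      hΔ.eq, Matrix.mul_assoc]
  set e : ℝ → Fin d → ℂ := fun s k => ((lam k + s : ℝ) : ℂ)⁻¹ with hedef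
  set M : ℝ → Matrix (Fin d) (Fin d) ℂ :=
    fun s => Matrix.diagonal (e s) * Δ' * Matrix.diagonal (e s) with hMdef
  -- the resolvent formula
  have hinv : ∀ s : ℝ, 0 < s →
      (A + (s:ℂ) • 1)⁻¹ = U * Matrix.diagonal (e s) * star U := by
    intro s hs
    apply Matrix.inv_eq_right_inv
    have hAs : A + (s:ℂ) • (1 : Matrix (Fin d) (Fin d) ℂ)
        = U * Matrix.diagonal (fun k => ((lam k + s : ℝ) : ℂ)) * star U := by
      have h1 : (s:ℂ) • (1 : Matrix (Fin d) (Fin d) ℂ)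
          = U * ((s:ℂ) • (1 : Matrix (Fin d) (Fin d) ℂ)) * star U := by
        rw [Matrix.mul_smul, Matrix.mul_one, Matrix.smul_mul, hU1]
      conv_lhs => rw [hH.spectral_theorem, Unitary.conjStarAlgAut_apply, h1]
      rw [← hUdef, ← Matrix.add_mul, ← Matrix.mul_add]
      have hd : Matrix.diagonal (RCLike.ofReal ∘ hH.eigenvalues) +
          (s:ℂ) • (1 : Matrix (Fin d) (Fin d) ℂ)
          = Matrix.diagonal fun k => ((lam k + s : ℝ) : ℂ) := by
        rw [← Matrix.diagonal_one, ← Matrix.diagonal_smul, Matrix.diagonal_add]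
        refine congrArg Matrix.diagonal (funext fun k => ?_)
        simp only [Function.comp_apply, Pi.add_apply, Pi.smul_apply, Pi.one_apply, smul_eq_mul,
          mul_one, hlamdef]
        push_cast
        rfl
      rw [hd]
    have hdiag : ∀ k, ((lam k + s : ℝ) : ℂ) * e s k = 1 := by
      intro k
      have hne : (lam k + s : ℝ) ≠ 0 := by have := hlam_pos k; positivity
      simp only [hedef]
      exact mul_inv_cancel₀ (Complex.ofReal_ne_zero.mpr hne)
    calc (A + (s:ℂ) • 1) * (U * Matrix.diagonal (e s) * star U)
        = U * (Matrix.diagonal (fun k => ((lam k + s : ℝ) : ℂ)) * (star U * U) *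
            Matrix.diagonal (e s)) * star U := by
          rw [hAs]; simp only [Matrix.mul_assoc]
      _ = 1 := by
          rw [hU2, Matrix.mul_one, Matrix.diagonal_mul_diagonal]
          simp only [hdiag]
          rw [Matrix.diagonal_one, Matrix.mul_one, hU1]
  -- sandwich formula for the integrand
  have hsand : ∀ s : ℝ, 0 < s →
      (A + (s:ℂ) • 1)⁻¹ * Δ * (A + (s:ℂ) • 1)⁻¹ = U * M s * star U := by
    intro s hs
    rw [hinv s hs]
    simp only [hMdef, hΔ'def, Matrix.mul_assoc]
  have hMe : ∀ (s : ℝ) (k l : Fin d), M s k l = e s k * Δ' k l * e s l := by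
    intro s k l
    simp [hMdef, Matrix.mul_diagonal, Matrix.diagonal_mul]
  have htr : ∀ X : Matrix (Fin d) (Fin d) ℂ,
      Matrix.trace (Δ * X) = ∑ i, ∑ j, Δ i j * X j i := by
    intro X
    simp [Matrix.trace, Matrix.diag, Matrix.mul_apply]
  -- entrywise expansion of U * M s * star U
  have hentry : ∀ (s : ℝ) (i j : Fin d), (U * M s * star U) i j
      = ∑ k, ∑ l, (U i k * Δ' k l * star U l j) * (e s k * e s l) := by
    intro s i j
    simp only [Matrix.mul_apply, hMe, Finset.sum_mul, Finset.mul_sum]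
    rw [Finset.sum_comm]
    exact Finset.sum_congr rfl fun k _ => Finset.sum_congr rfl fun l _ => by ring
  -- integrability of each entry
  have hIntee : ∀ k l : Fin d, Integrable (fun s : ℝ => e s k * e s l)
      (volume.restrict (Set.Ioi 0)) := by
    intro k l
    simpa [hedef, IntegrableOn] using aux_int_complex (hlam_pos k) (hlam_pos l)
  have hIntUMU : ∀ i j : Fin d, Integrable (fun s : ℝ => (U * M s * star U) i j)
      (volume.restrict (Set.Ioi 0)) := by
    intro i j
    have h : Integrable (fun s : ℝ => ∑ k, ∑ l, (U i k * Δ' k l * star U l j) * (e s k * e s l))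
        (volume.restrict (Set.Ioi 0)) :=
      integrable_finset_sum _ fun k _ => integrable_finset_sum _ fun l _ =>
        (hIntee k l).const_mul _
    exact h.congr (Filter.Eventually.of_forall fun s => (hentry s i j).symm)
  -- Tmap entries
  have hTmap : ∀ i j : Fin d, Tmap A Δ i j
      = ∫ s in Set.Ioi (0:ℝ), (U * M s * star U) i j := by
    intro i j
    rw [Tmap, Matrix.of_apply]
    exact setIntegral_congr_fun measurableSet_Ioi fun s hs => by
      rw [hsand s hs]
  -- the real nonnegative integrand
  set r : ℝ → ℝ := fun s => ∑ k, ∑ l, Complex.normSq (Δ' k l) *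
    ((lam k + s)⁻¹ * (lam l + s)⁻¹) with hrdef
  have hr : ∀ s ∈ Set.Ioi (0:ℝ), 0 ≤ r s := by
    intro s hs
    have hs0 : (0:ℝ) < s := hs
    simp only [hrdef]
    refine Finset.sum_nonneg fun k _ => Finset.sum_nonneg fun l _ => ?_
    have h1 := hlam_pos k
    have h2 := hlam_pos l
    have h3 := Complex.normSq_nonneg (Δ' k l)
    positivity
  -- pointwise trace identity
  have hpt : ∀ s ∈ Set.Ioi (0:ℝ),
      (∑ i, ∑ j, Δ i j * (U * M s * star U) j i) = ((r s : ℝ) : ℂ) := by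
    intro s hs
    have h1 : (∑ i, ∑ j, Δ i j * (U * M s * star U) j i)
        = Matrix.trace (Δ * (U * M s * star U)) := (htr _).symm
    have h2 : Matrix.trace (Δ * (U * M s * star U)) = Matrix.trace (Δ' * M s) := by
      calc Matrix.trace (Δ * (U * M s * star U))
          = Matrix.trace ((Δ * U) * M s * star U) := by simp only [Matrix.mul_assoc]
        _ = Matrix.trace (star U * ((Δ * U) * M s)) := (Matrix.trace_mul_comm _ _)
        _ = Matrix.trace (Δ' * M s) := by rw [hΔ'def]; simp only [Matrix.mul_assoc]
    have h3 : Matrix.trace (Δ' * M s) = ((r s : ℝ) : ℂ) := by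
      simp only [hrdef, Matrix.trace, Matrix.diag, Matrix.mul_apply, hMe]
      push_cast
      refine Finset.sum_congr rfl fun k _ => Finset.sum_congr rfl fun l _ => ?_
      rw [← (hΔ'h.apply l k)]
      simp only [hedef]
      push_cast
      rw [Complex.star_def]
      linear_combination (((lam l : ℂ) + (s:ℂ))⁻¹ * ((lam k : ℂ) + (s:ℂ))⁻¹) *
        Complex.mul_conj (Δ' k l)
    exact h1.trans (h2.trans h3)
  -- put everything together
  have h1 : Matrix.trace (Δ * Tmap A Δ)
      = ∑ i, ∑ j, Δ i j * ∫ s in Set.Ioi (0:ℝ), (U * M s * star U) j i := by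
    rw [htr]
    exact Finset.sum_congr rfl fun i _ => Finset.sum_congr rfl fun j _ => by rw [hTmap]
  have hswap : (∑ i, ∑ j, Δ i j * ∫ s in Set.Ioi (0:ℝ), (U * M s * star U) j i)
      = ∫ s in Set.Ioi (0:ℝ), ∑ i, ∑ j, Δ i j * (U * M s * star U) j i := by
    have hI : ∀ i j : Fin d, Integrable (fun s : ℝ => Δ i j * (U * M s * star U) j i)
        (volume.restrict (Set.Ioi 0)) := fun i j => (hIntUMU j i).const_mul _
    calc (∑ i, ∑ j, Δ i j * ∫ s in Set.Ioi (0:ℝ), (U * M s * star U) j i)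
        = ∑ i, ∑ j, ∫ s in Set.Ioi (0:ℝ), Δ i j * (U * M s * star U) j i := by
          simp_rw [MeasureTheory.integral_const_mul]
      _ = ∑ i, ∫ s in Set.Ioi (0:ℝ), ∑ j, Δ i j * (U * M s * star U) j i :=
          Finset.sum_congr rfl fun i _ => (integral_finset_sum _ fun j _ => hI i j).symm
      _ = _ := (integral_finset_sum _ fun i _ => integrable_finset_sum _ fun j _ => hI i j).symm
  have hco : (∫ s in Set.Ioi (0:ℝ), ((r s : ℝ) : ℂ))
      = ((∫ s in Set.Ioi (0:ℝ), r s : ℝ) : ℂ) := integral_ofReal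
  rw [h1, hswap, setIntegral_congr_fun measurableSet_Ioi hpt, hco, Complex.ofReal_re]
  exact setIntegral_nonneg measurableSet_Ioi hr
end

section
/- For a positive definite operator A and a self-adjoint operator Δ, the derivative at t = 0 of t ↦ log(A + tΔ) equals T_A(Δ) = ∫₀^∞ (A+sI)^{-1} Δ (A+sI)^{-1} ds. -/
open Matrix MeasureTheory Real Filter
open scoped ComplexOrder

attribute [local instance] Matrix.frobeniusNormedAddCommGroup Matrix.frobeniusNormedSpace
attribute [local instance] Matrix.frobeniusNormedRing Matrix.frobeniusNormedAlgebra

namespace TmapAux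
variable {d : ℕ}

/-- squared euclidean norm of a vector -/
noncomputable def S (x : Fin d → ℂ) : ℝ := ∑ i, ‖x i‖^2

lemma S_nonneg (x : Fin d → ℂ) : 0 ≤ S x :=
  Finset.sum_nonneg fun _ _ => sq_nonneg _

lemma S_pos {x : Fin d → ℂ} (hx : x ≠ 0) : 0 < S x := by
  obtain ⟨i, hi⟩ := Function.ne_iff.mp hx
  have : (0:ℝ) < ‖x i‖^2 := pow_pos (norm_pos_iff.mpr hi) 2
  exact Finset.sum_pos' (fun _ _ => sq_nonneg _) ⟨i, Finset.mem_univ i, this⟩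

lemma star_mul_self_eq (z : ℂ) : star z * z = (‖z‖^2 : ℝ) := by
  rw [mul_comm]
  rw [show star z = starRingEnd ℂ z from rfl, Complex.mul_conj']
  push_cast; ring

lemma dot_star_self (x : Fin d → ℂ) : star x ⬝ᵥ x = (S x : ℂ) := by
  simp only [dotProduct, Pi.star_apply, S, star_mul_self_eq]
  push_cast
  rfl

lemma S_single (j : Fin d) : S (Pi.single j (1:ℂ)) = 1 := by
  simp [S, Pi.single_apply, apply_ite]

lemma abs_dot_le (x y : Fin d → ℂ) :
    ‖star x ⬝ᵥ y‖ ≤ Real.sqrt (S x) * Real.sqrt (S y) := by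
  have h := norm_inner_le_norm (𝕜 := ℂ) (E := EuclideanSpace ℂ (Fin d))
    ((WithLp.equiv 2 _).symm x) ((WithLp.equiv 2 _).symm y)
  rw [EuclideanSpace.norm_eq, EuclideanSpace.norm_eq] at h
  simp only [PiLp.inner_apply, RCLike.inner_apply, WithLp.equiv_symm_apply, WithLp.ofLp_toLp] at h
  have e1 : star x ⬝ᵥ y = ∑ i, y i * star (x i) :=
    Finset.sum_congr rfl fun i _ => mul_comm (star (x i)) (y i)
  rw [e1]
  exact h


section spectral
variable {X : Matrix (Fin d) (Fin d) ℂ} (hX : X.IsHermitian)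

/-- the diagonalizing coordinates of a vector -/
noncomputable def coords (hX : X.IsHermitian) (x : Fin d → ℂ) : Fin d → ℂ :=
  (star (hX.eigenvectorUnitary : Matrix (Fin d) (Fin d) ℂ)) *ᵥ x

lemma star_coords (x : Fin d → ℂ) :
    star (coords hX x) = star x ᵥ* (hX.eigenvectorUnitary : Matrix (Fin d) (Fin d) ℂ) := by
  rw [coords, star_mulVec, star_eq_conjTranspose, conjTranspose_conjTranspose]

lemma S_coords (x : Fin d → ℂ) : S (coords hX x) = S x := by
  have h : star (coords hX x) ⬝ᵥ coords hX x = star x ⬝ᵥ x := by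
    rw [star_coords, coords, ← Matrix.dotProduct_mulVec, Matrix.mulVec_mulVec,
      (Matrix.mem_unitaryGroup_iff).mp hX.eigenvectorUnitary.2, Matrix.one_mulVec]
  rw [dot_star_self, dot_star_self] at h
  exact_mod_cast h

lemma quad_repr (x : Fin d → ℂ) :
    star x ⬝ᵥ X *ᵥ x = ∑ k, (hX.eigenvalues k : ℂ) * ((‖coords hX x k‖^2 : ℝ) : ℂ) := by
  set U := (hX.eigenvectorUnitary : Matrix (Fin d) (Fin d) ℂ) with hU
  have h1 : X *ᵥ x = U *ᵥ (diagonal (RCLike.ofReal ∘ hX.eigenvalues) *ᵥ coords hX x) := by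
    conv_lhs => rw [hX.spectral_theorem]; simp only [Unitary.conjStarAlgAut_apply, Unitary.coe_star]
    rw [coords, ← Matrix.mulVec_mulVec, ← Matrix.mulVec_mulVec]
  rw [h1, Matrix.dotProduct_mulVec, ← star_coords hX]
  simp only [dotProduct, Pi.star_apply, Matrix.mulVec_diagonal]
  congr 1
  ext k
  rw [show (RCLike.ofReal ∘ hX.eigenvalues) k = ((hX.eigenvalues k : ℝ) : ℂ) from rfl]
  rw [mul_left_comm, star_mul_self_eq]

lemma quad_re_ge {c : ℝ} (hc : ∀ k, c ≤ hX.eigenvalues k) (x : Fin d → ℂ) :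
    c * S x ≤ (star x ⬝ᵥ X *ᵥ x).re := by
  rw [quad_repr hX x]
  have : (∑ k, (hX.eigenvalues k : ℂ) * ((‖coords hX x k‖^2 : ℝ) : ℂ)).re
      = ∑ k, hX.eigenvalues k * ‖coords hX x k‖^2 := by
    rw [Complex.re_sum]
    simp only [← Complex.ofReal_mul, Complex.ofReal_re]
  rw [this, ← S_coords hX x, S, Finset.mul_sum]
  exact Finset.sum_le_sum fun k _ => mul_le_mul_of_nonneg_right (hc k) (sq_nonneg _)

lemma quad_re_le {C : ℝ} (hC : ∀ k, hX.eigenvalues k ≤ C) (x : Fin d → ℂ) :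
    (star x ⬝ᵥ X *ᵥ x).re ≤ C * S x := by
  rw [quad_repr hX x]
  have : (∑ k, (hX.eigenvalues k : ℂ) * ((‖coords hX x k‖^2 : ℝ) : ℂ)).re
      = ∑ k, hX.eigenvalues k * ‖coords hX x k‖^2 := by
    rw [Complex.re_sum]
    simp only [← Complex.ofReal_mul, Complex.ofReal_re]
  rw [this, ← S_coords hX x, S, Finset.mul_sum]
  exact Finset.sum_le_sum fun k _ => mul_le_mul_of_nonneg_right (hC k) (sq_nonneg _)

lemma quad_im (hX' : X.IsHermitian) (x : Fin d → ℂ) : (star x ⬝ᵥ X *ᵥ x).im = 0 := by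
  rw [quad_repr hX' x, Complex.im_sum]
  simp only [← Complex.ofReal_mul, Complex.ofReal_im]
  simp

end spectral

/-- coercivity of a matrix quadratic form -/
def Coercive (m : ℝ) (X : Matrix (Fin d) (Fin d) ℂ) : Prop :=
  ∀ x, m * S x ≤ (star x ⬝ᵥ X *ᵥ x).re

lemma posDef_of_coercive {X : Matrix (Fin d) (Fin d) ℂ} (hX : X.IsHermitian)
    {m : ℝ} (hm : 0 < m) (h : Coercive m X) : X.PosDef := by
  refine posDef_iff_dotProduct_mulVec.mpr ⟨hX, fun x hx => ?_⟩
  rw [Complex.lt_def]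
  refine ⟨?_, by simpa using (quad_im hX x).symm⟩
  simpa using lt_of_lt_of_le (mul_pos hm (S_pos hx)) (h x)

lemma frob_sq (M : Matrix (Fin d) (Fin d) ℂ) : ‖M‖^2 = ∑ i, ∑ j, ‖M i j‖^2 := by
  rw [Matrix.frobenius_norm_def]
  have hnn : (0:ℝ) ≤ ∑ i, ∑ j, ‖M i j‖ ^ (2:ℝ) := by
    refine Finset.sum_nonneg fun i _ => Finset.sum_nonneg fun j _ => ?_
    positivity
  rw [← Real.rpow_natCast ((∑ i, ∑ j, ‖M i j‖ ^ (2:ℝ)) ^ (1/2:ℝ)) 2, ← Real.rpow_mul hnn]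
  norm_num

lemma norm_entry_le (M : Matrix (Fin d) (Fin d) ℂ) (i j : Fin d) : ‖M i j‖ ≤ ‖M‖ := by
  have h1 : ‖M i j‖^2 ≤ ‖M‖^2 := by
    rw [frob_sq]
    calc ‖M i j‖^2 ≤ ∑ j', ‖M i j'‖^2 :=
          Finset.single_le_sum (f := fun j' => ‖M i j'‖^2)
            (fun j' _ => sq_nonneg _) (Finset.mem_univ j)
      _ ≤ ∑ i', ∑ j', ‖M i' j'‖^2 :=
          Finset.single_le_sum (f := fun i' => ∑ j', ‖M i' j'‖^2)
            (fun i' _ => Finset.sum_nonneg fun j' _ => sq_nonneg _) (Finset.mem_univ i)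
  have := Real.sqrt_le_sqrt h1
  rwa [Real.sqrt_sq (norm_nonneg _), Real.sqrt_sq (norm_nonneg _)] at this

lemma S_col_inv {X : Matrix (Fin d) (Fin d) ℂ} (hunit : IsUnit X)
    {m : ℝ} (hm : 0 < m) (h : Coercive m X) (j : Fin d) :
    S (fun i => X⁻¹ i j) ≤ 1 / m^2 := by
  set v : Fin d → ℂ := X⁻¹ *ᵥ Pi.single j 1 with hv
  have hXv : X *ᵥ v = Pi.single j 1 := by
    rw [hv, Matrix.mulVec_mulVec, Matrix.mul_nonsing_inv _ ((Matrix.isUnit_iff_isUnit_det X).mp hunit),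
      Matrix.one_mulVec]
  -- coercivity + Cauchy-Schwarz : m^2 * S v ≤ S (X *ᵥ v)
  have key : m^2 * S v ≤ S (X *ᵥ v) := by
    have h1 : m * S v ≤ ‖star v ⬝ᵥ X *ᵥ v‖ := le_trans (h v)
      (le_trans (le_abs_self _) (Complex.abs_re_le_norm _))
    have h2 := abs_dot_le v (X *ᵥ v)
    have h3 : m * S v ≤ Real.sqrt (S v) * Real.sqrt (S (X *ᵥ v)) := le_trans h1 h2
    have hsv : S v = Real.sqrt (S v) * Real.sqrt (S v) :=
      (Real.mul_self_sqrt (S_nonneg v)).symm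
    rcases eq_or_lt_of_le (S_nonneg v) with hz | hz
    · rw [← hz]; simpa using S_nonneg (X *ᵥ v)
    · have ha : 0 < Real.sqrt (S v) := Real.sqrt_pos.mpr hz
      have h4 : m * Real.sqrt (S v) ≤ Real.sqrt (S (X *ᵥ v)) := by
        rw [hsv] at h3; nlinarith [ha]
      calc m^2 * S v = (m * Real.sqrt (S v))^2 := by
            rw [mul_pow, Real.sq_sqrt (S_nonneg v)]
        _ ≤ (Real.sqrt (S (X *ᵥ v)))^2 := by
            nlinarith [h4, (by positivity : (0:ℝ) ≤ m * Real.sqrt (S v))]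
        _ = S (X *ᵥ v) := Real.sq_sqrt (S_nonneg _)
  rw [hXv, S_single] at key
  have hvj : (fun i => X⁻¹ i j) = v := by
    funext i; simp [hv, Matrix.mulVec_single]
  rw [hvj]
  exact (le_div_iff₀' (by positivity)).mpr key

lemma norm_inv_le {X : Matrix (Fin d) (Fin d) ℂ} (hX : X.IsHermitian)
    {m : ℝ} (hm : 0 < m) (h : Coercive m X) :
    ‖X⁻¹‖ ≤ Real.sqrt d / m := by
  have hunit := (posDef_of_coercive hX hm h).isUnit
  have h1 : ‖X⁻¹‖^2 ≤ d / m^2 := by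
    rw [frob_sq]
    calc ∑ i, ∑ j, ‖X⁻¹ i j‖^2 = ∑ j, ∑ i, ‖X⁻¹ i j‖^2 := Finset.sum_comm
      _ = ∑ j, S (fun i => X⁻¹ i j) := rfl
      _ ≤ ∑ _j : Fin d, 1 / m^2 :=
          Finset.sum_le_sum fun j _ => S_col_inv hunit hm h j
      _ = d / m^2 := by simp [div_eq_mul_inv, mul_comm]
  have h2 := Real.sqrt_le_sqrt h1
  rwa [Real.sqrt_sq (norm_nonneg _), Real.sqrt_div (by positivity) _,
    Real.sqrt_sq hm.le] at h2


lemma hasDerivAt_neg_inv_shift (a : ℝ) (ha : 0 < a) {x : ℝ} (hx : 0 ≤ x) :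
    HasDerivAt (fun s => -(a+s)⁻¹) (((a+x)^2)⁻¹) x := by
  have h1 : HasDerivAt (fun s : ℝ => a + s) 1 x := (hasDerivAt_id x).const_add a
  have h2 : HasDerivAt (fun s => -(a+s)⁻¹) (-(-1 / (a + x) ^ 2)) x := (h1.inv (by positivity)).neg
  convert h2 using 1
  rw [neg_div, neg_neg, one_div]

lemma integrableOn_inv_sq (a : ℝ) (ha : 0 < a) :
    IntegrableOn (fun s => ((a+s)^2)⁻¹) (Set.Ioi (0:ℝ)) := by
  have ht : Tendsto (fun s : ℝ => -(a+s)⁻¹) atTop (nhds (-0)) :=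
    (Tendsto.comp tendsto_inv_atTop_zero (tendsto_atTop_add_const_left _ a tendsto_id)).neg
  rw [neg_zero] at ht
  apply integrableOn_Ioi_deriv_of_nonneg _ _ _ ht
  · have hc : ContinuousAt (fun s : ℝ => a + s) 0 := by fun_prop
    exact ((hc.inv₀ (by simpa using ha.ne')).neg).continuousWithinAt
  · exact fun x hx => hasDerivAt_neg_inv_shift a ha (le_of_lt hx)
  · intro x hx; positivity

lemma resolvent_diff_eq (lam : ℝ) (hlam : 0 < lam) {s : ℝ} (hs : 0 < s) :
    (1+s)⁻¹ - (lam+s)⁻¹ = (lam - 1) * (((1+s)*(lam+s))⁻¹) := by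
  field_simp
  ring

lemma integrableOn_resolvent_diff (lam : ℝ) (hlam : 0 < lam) :
    IntegrableOn (fun s => (1+s)⁻¹ - (lam+s)⁻¹) (Set.Ioi (0:ℝ)) := by
  set m := min 1 lam with hm
  have hm0 : 0 < m := lt_min one_pos hlam
  apply Integrable.mono' (((integrableOn_inv_sq m hm0).const_mul |lam - 1|))
  · apply ContinuousOn.aestronglyMeasurable _ measurableSet_Ioi
    apply ContinuousOn.sub
    · exact ContinuousOn.inv₀ (by fun_prop) (fun x hx => by
        have : (0:ℝ) < x := hx; positivity)
    · exact ContinuousOn.inv₀ (by fun_prop) (fun x hx => by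
        have : (0:ℝ) < x := hx; positivity)
  · rw [ae_restrict_iff' measurableSet_Ioi]
    refine Eventually.of_forall fun s hs => ?_
    have hs' : (0:ℝ) < s := hs
    rw [resolvent_diff_eq lam hlam hs', Real.norm_eq_abs, abs_mul, abs_inv]
    have h1 : (m+s)^2 ≤ (1+s)*(lam+s) := by
      have h2 : m ≤ 1 := min_le_left _ _
      have h3 : m ≤ lam := min_le_right _ _
      nlinarith [hm0, hs']
    have h4 : (0:ℝ) < (m+s)^2 := by positivity
    have h5 : |(1+s)*(lam+s)| = (1+s)*(lam+s) := abs_of_pos (by nlinarith)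
    rw [h5]
    gcongr

lemma integral_resolvent_diff (lam : ℝ) (hlam : 0 < lam) :
    ∫ s in Set.Ioi (0:ℝ), ((1+s)⁻¹ - (lam+s)⁻¹) = Real.log lam := by
  have hderiv : ∀ x ∈ Set.Ici (0:ℝ),
      HasDerivAt (fun s => Real.log (1+s) - Real.log (lam+s)) ((1+x)⁻¹ - (lam+x)⁻¹) x := by
    intro x hx
    have hx' : (0:ℝ) ≤ x := hx
    have h1 : HasDerivAt (fun s : ℝ => 1 + s) 1 x := (hasDerivAt_id x).const_add 1
    have h2 : HasDerivAt (fun s : ℝ => lam + s) 1 x := (hasDerivAt_id x).const_add lam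
    have h3 := (h1.log (by positivity)).sub (h2.log (by positivity))
    simp only [one_div] at h3; exact h3
  have htend : Tendsto (fun s => Real.log (1+s) - Real.log (lam+s)) atTop (nhds 0) := by
    have h1 : (fun s : ℝ => Real.log (1+s) - Real.log (lam+s))
        =ᶠ[atTop] fun s => Real.log ((1+s)/(lam+s)) := by
      filter_upwards [eventually_gt_atTop (0:ℝ)] with s hs
      rw [Real.log_div (by positivity) (by positivity)]
    rw [tendsto_congr' h1]
    have h2 : Tendsto (fun s : ℝ => (1+s)/(lam+s)) atTop (nhds 1) := by
      have h3 : Tendsto (fun s : ℝ => 1 - (lam-1)*(lam+s)⁻¹) atTop (nhds (1 - (lam-1)*0)) :=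
        tendsto_const_nhds.sub (tendsto_const_nhds.mul
          (Tendsto.comp tendsto_inv_atTop_zero (tendsto_atTop_add_const_left _ lam tendsto_id)))
      rw [show (1:ℝ) - (lam-1)*0 = 1 by ring] at h3
      apply h3.congr'
      filter_upwards [eventually_gt_atTop (0:ℝ)] with s hs
      have hlams : (0:ℝ) < lam + s := by positivity
      field_simp
      ring
    have h4 := (Real.continuousAt_log one_ne_zero).tendsto.comp h2
    rw [Real.log_one] at h4
    exact h4
  have key := integral_Ioi_of_hasDerivAt_of_tendsto' hderiv
    (integrableOn_resolvent_diff lam hlam) htend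
  rw [key]
  simp [Real.log_one]


section resolvent
variable {X : Matrix (Fin d) (Fin d) ℂ}

lemma unitary_conj_entry (U : Matrix (Fin d) (Fin d) ℂ) (v : Fin d → ℂ) (i j : Fin d) :
    (U * Matrix.diagonal v * star U) i j = ∑ k, U i k * v k * star (U j k) := by
  rw [star_eq_conjTranspose, Matrix.mul_apply]
  simp only [Matrix.mul_diagonal, Matrix.conjTranspose_apply]

lemma spectral_add_smul (hX : X.IsHermitian) (s : ℝ) :
    X + (s:ℂ) • 1 = (hX.eigenvectorUnitary : Matrix (Fin d) (Fin d) ℂ) *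
      Matrix.diagonal (fun k => ((hX.eigenvalues k + s : ℝ) : ℂ)) *
      star (hX.eigenvectorUnitary : Matrix (Fin d) (Fin d) ℂ) := by
  set U := (hX.eigenvectorUnitary : Matrix (Fin d) (Fin d) ℂ) with hUdef
  have hU : U * star U = 1 := (Matrix.mem_unitaryGroup_iff).mp hX.eigenvectorUnitary.2
  have h1 : (s:ℂ) • (1 : Matrix (Fin d) (Fin d) ℂ)
      = U * Matrix.diagonal (fun _ => (s:ℂ)) * star U := by
    rw [← Matrix.smul_one_eq_diagonal]
    rw [Matrix.mul_smul, mul_one, Matrix.smul_mul, hU]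
  conv_lhs => rw [hX.spectral_theorem]; simp only [Unitary.conjStarAlgAut_apply, Unitary.coe_star]; rw [h1]
  rw [← Matrix.add_mul, ← Matrix.mul_add, Matrix.diagonal_add]
  congr 1
  ext k
  push_cast
  rfl

lemma resolvent_entry (hX : X.PosDef) {s : ℝ} (hs : 0 ≤ s) (i j : Fin d) :
    (X + (s:ℂ) • 1)⁻¹ i j = ∑ k, (hX.1.eigenvectorUnitary : Matrix (Fin d) (Fin d) ℂ) i k *
      (((hX.1.eigenvalues k + s : ℝ) : ℂ))⁻¹ *
      star ((hX.1.eigenvectorUnitary : Matrix (Fin d) (Fin d) ℂ) j k) := by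
  set U := (hX.1.eigenvectorUnitary : Matrix (Fin d) (Fin d) ℂ) with hUdef
  have hU : U * star U = 1 := (Matrix.mem_unitaryGroup_iff).mp hX.1.eigenvectorUnitary.2
  have hU' : star U * U = 1 := (Matrix.mem_unitaryGroup_iff').mp hX.1.eigenvectorUnitary.2
  have hne : ∀ k, ((hX.1.eigenvalues k + s : ℝ) : ℂ) ≠ 0 := fun k => by
    have := hX.eigenvalues_pos k
    exact_mod_cast Complex.ofReal_ne_zero.mpr (by positivity)
  have h2 : (X + (s:ℂ) • 1) * (U * Matrix.diagonal
      (fun k => (((hX.1.eigenvalues k + s : ℝ) : ℂ))⁻¹) * star U) = 1 := by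
    rw [spectral_add_smul hX.1 s]
    rw [show ∀ (D D' : Matrix (Fin d) (Fin d) ℂ), (U * D * star U) * (U * D' * star U)
        = U * (D * D') * star U from fun D D' => by
      simp only [← Matrix.mul_assoc]
      rw [Matrix.mul_assoc (U * D) (star U) U, hU', Matrix.mul_one, Matrix.mul_assoc U D D']]
    rw [Matrix.diagonal_mul_diagonal]
    have : (fun i => (((hX.1.eigenvalues i + s :ℝ)) : ℂ) * (((hX.1.eigenvalues i + s : ℝ) : ℂ))⁻¹)
        = fun _ => (1:ℂ) := by
      funext k; exact mul_inv_cancel₀ (hne k)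
    rw [this, Matrix.diagonal_one, Matrix.mul_one, hU]
  rw [Matrix.inv_eq_right_inv h2, unitary_conj_entry]

lemma mlog_entry (hX : X.PosDef) (i j : Fin d) :
    mlog X i j = ∑ k, (hX.1.eigenvectorUnitary : Matrix (Fin d) (Fin d) ℂ) i k *
      ((Real.log (hX.1.eigenvalues k) : ℝ) : ℂ) *
      star ((hX.1.eigenvectorUnitary : Matrix (Fin d) (Fin d) ℂ) j k) := by
  rw [mlog, dif_pos hX.1]
  exact unitary_conj_entry _ _ i j

lemma one_entry_eq (hX : X.PosDef) (i j : Fin d) :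
    (1 : Matrix (Fin d) (Fin d) ℂ) i j = ∑ k, (hX.1.eigenvectorUnitary : Matrix (Fin d) (Fin d) ℂ) i k *
      star ((hX.1.eigenvectorUnitary : Matrix (Fin d) (Fin d) ℂ) j k) := by
  have hU : (hX.1.eigenvectorUnitary : Matrix (Fin d) (Fin d) ℂ) *
      star (hX.1.eigenvectorUnitary : Matrix (Fin d) (Fin d) ℂ) = 1 :=
    (Matrix.mem_unitaryGroup_iff).mp hX.1.eigenvectorUnitary.2
  rw [← hU, star_eq_conjTranspose, Matrix.mul_apply]
  simp only [Matrix.conjTranspose_apply]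

lemma integrand_eq (hX : X.PosDef) {s : ℝ} (hs : 0 ≤ s) (i j : Fin d) :
    (((1+s)⁻¹ : ℝ) : ℂ) * (1 : Matrix (Fin d) (Fin d) ℂ) i j - (X + (s:ℂ) • 1)⁻¹ i j
      = ∑ k, (hX.1.eigenvectorUnitary : Matrix (Fin d) (Fin d) ℂ) i k *
          star ((hX.1.eigenvectorUnitary : Matrix (Fin d) (Fin d) ℂ) j k) *
          ((((1+s)⁻¹ - (hX.1.eigenvalues k + s)⁻¹ : ℝ)) : ℂ) := by
  rw [resolvent_entry hX hs, one_entry_eq hX, Finset.mul_sum, ← Finset.sum_sub_distrib]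
  congr 1
  funext k
  push_cast
  ring

lemma integrableOn_entry (hX : X.PosDef) (i j : Fin d) :
    IntegrableOn (fun s : ℝ => (((1+s)⁻¹ : ℝ) : ℂ) * (1 : Matrix (Fin d) (Fin d) ℂ) i j
      - (X + (s:ℂ) • 1)⁻¹ i j) (Set.Ioi (0:ℝ)) := by
  have heq : Set.EqOn (fun s : ℝ => (((1+s)⁻¹ : ℝ) : ℂ) * (1 : Matrix (Fin d) (Fin d) ℂ) i j
      - (X + (s:ℂ) • 1)⁻¹ i j)
      (fun s : ℝ => ∑ k, (hX.1.eigenvectorUnitary : Matrix (Fin d) (Fin d) ℂ) i k *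
          star ((hX.1.eigenvectorUnitary : Matrix (Fin d) (Fin d) ℂ) j k) *
          ((((1+s)⁻¹ - (hX.1.eigenvalues k + s)⁻¹ : ℝ)) : ℂ)) (Set.Ioi 0) :=
    fun s hs => integrand_eq hX (le_of_lt hs) i j
  rw [integrableOn_congr_fun heq measurableSet_Ioi]
  apply integrable_finset_sum
  intro k _
  exact (Integrable.ofReal (integrableOn_resolvent_diff _ (hX.eigenvalues_pos k))).const_mul _

lemma mlog_entry_integral (hX : X.PosDef) (i j : Fin d) :
    mlog X i j = ∫ s in Set.Ioi (0:ℝ), ((((1+s)⁻¹ : ℝ) : ℂ) * (1 : Matrix (Fin d) (Fin d) ℂ) i j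
      - (X + (s:ℂ) • 1)⁻¹ i j) := by
  rw [setIntegral_congr_fun measurableSet_Ioi (fun s hs => integrand_eq hX (le_of_lt hs) i j)]
  rw [integral_finset_sum (μ := volume.restrict (Set.Ioi 0)) Finset.univ
    (f := fun k (s:ℝ) => (hX.1.eigenvectorUnitary : Matrix (Fin d) (Fin d) ℂ) i k *
      star ((hX.1.eigenvectorUnitary : Matrix (Fin d) (Fin d) ℂ) j k) *
      ((((1+s)⁻¹ - (hX.1.eigenvalues k + s)⁻¹ : ℝ)) : ℂ))
    (fun k _ =>
      (Integrable.ofReal (integrableOn_resolvent_diff _ (hX.eigenvalues_pos k))).const_mul _)]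
  rw [mlog_entry hX]
  congr 1
  funext k
  have hcast : ∀ f : ℝ → ℝ, (∫ s in Set.Ioi (0:ℝ), ((f s : ℝ) : ℂ))
      = ((∫ s in Set.Ioi (0:ℝ), f s : ℝ) : ℂ) := fun f => integral_ofReal
  rw [MeasureTheory.integral_const_mul, hcast,
    integral_resolvent_diff _ (hX.eigenvalues_pos k)]
  ring

end resolvent

noncomputable instance : FiniteDimensional ℝ (Matrix (Fin d) (Fin d) ℂ) :=
  Module.Finite.trans ℂ _

/-- entry evaluation as a continuous linear map over ℝ -/
noncomputable def entryCLM (i j : Fin d) : Matrix (Fin d) (Fin d) ℂ →L[ℝ] ℂ :=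
  LinearMap.toContinuousLinearMap
    { toFun := fun M : Matrix (Fin d) (Fin d) ℂ => M i j
      map_add' := fun _ _ => rfl
      map_smul' := fun _ _ => rfl }

@[simp] lemma entryCLM_apply (i j : Fin d) (M : Matrix (Fin d) (Fin d) ℂ) :
    entryCLM i j M = M i j := rfl

lemma hasDerivAt_entry {f : ℝ → Matrix (Fin d) (Fin d) ℂ} {L : Matrix (Fin d) (Fin d) ℂ}
    {t : ℝ} (h : HasDerivAt f L t) (i j : Fin d) :
    HasDerivAt (fun u => f u i j) (L i j) t :=
  ((entryCLM i j).hasFDerivAt.comp_hasDerivAt t h)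

lemma hasDerivAt_of_entries {f : ℝ → Matrix (Fin d) (Fin d) ℂ} {L : Matrix (Fin d) (Fin d) ℂ}
    {t : ℝ} (h : ∀ i j, HasDerivAt (fun u => f u i j) (L i j) t) :
    HasDerivAt f L t := by
  let e₀ : Matrix (Fin d) (Fin d) ℂ ≃ₗ[ℝ] (Fin d → Fin d → ℂ) :=
    { toFun := fun M i j => M i j
      invFun := fun g => Matrix.of g
      map_add' := fun _ _ => rfl
      map_smul' := fun _ _ => rfl
      left_inv := fun _ => rfl
      right_inv := fun _ => rfl }
  let e : Matrix (Fin d) (Fin d) ℂ ≃L[ℝ] (Fin d → Fin d → ℂ) := e₀.toContinuousLinearEquiv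
  have hp : HasDerivAt (fun u => e (f u)) (e L) t := by
    rw [hasDerivAt_pi]
    intro i
    rw [hasDerivAt_pi]
    intro j
    exact h i j
  have hFp := hp.hasFDerivAt
  have hcomp : ((e : Matrix (Fin d) (Fin d) ℂ →L[ℝ] (Fin d → Fin d → ℂ)).comp
      ((1 : ℝ →L[ℝ] ℝ).smulRight L)) = (1 : ℝ →L[ℝ] ℝ).smulRight (e L) := by
    ext x
    simp
  have h2 := (e.symm : (Fin d → Fin d → ℂ) →L[ℝ] Matrix (Fin d) (Fin d) ℂ).hasFDerivAt.comp_hasDerivAt t hp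
  have h3 : HasDerivAt (fun u => (e.symm : (Fin d → Fin d → ℂ) →L[ℝ] Matrix (Fin d) (Fin d) ℂ) (e (f u)))
      ((e.symm : (Fin d → Fin d → ℂ) →L[ℝ] Matrix (Fin d) (Fin d) ℂ) (e L)) t := h2
  simp only [ContinuousLinearEquiv.coe_coe, ContinuousLinearEquiv.symm_apply_apply] at h3
  exact h3

lemma continuous_affine (M : Matrix (Fin d) (Fin d) ℂ) :
    Continuous (fun s : ℝ => M + (s:ℂ) • (1 : Matrix (Fin d) (Fin d) ℂ)) :=
  continuous_const.add ((Complex.continuous_ofReal).smul continuous_const)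

lemma continuousOn_resolvent (M : Matrix (Fin d) (Fin d) ℂ)
    (h : ∀ s ∈ Set.Ioi (0:ℝ), IsUnit (M + (s:ℂ) • (1 : Matrix (Fin d) (Fin d) ℂ))) :
    ContinuousOn (fun s : ℝ => (M + (s:ℂ) • (1 : Matrix (Fin d) (Fin d) ℂ))⁻¹) (Set.Ioi 0) := by
  have hfun : (fun s : ℝ => (M + (s:ℂ) • (1 : Matrix (Fin d) (Fin d) ℂ))⁻¹)
      = fun s : ℝ => Ring.inverse (M + (s:ℂ) • (1 : Matrix (Fin d) (Fin d) ℂ)) := by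
    funext s; rw [Matrix.nonsing_inv_eq_ringInverse]
  rw [hfun]
  intro s hs
  have h1 : ContinuousAt Ring.inverse ((h s hs).unit : Matrix (Fin d) (Fin d) ℂ) :=
    NormedRing.inverse_continuousAt _
  rw [IsUnit.unit_spec] at h1
  have h2 : ContinuousAt (fun u : ℝ =>
      Ring.inverse (M + (u:ℂ) • (1 : Matrix (Fin d) (Fin d) ℂ))) s :=
    ContinuousAt.comp (g := Ring.inverse)
      (f := fun u : ℝ => M + (u:ℂ) • (1 : Matrix (Fin d) (Fin d) ℂ)) h1
      ((continuous_affine M).continuousAt)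
  exact h2.continuousWithinAt


-- new material starts here
lemma isHermitian_smul_real (t : ℝ) {Δ : Matrix (Fin d) (Fin d) ℂ} (h : Δ.IsHermitian) :
    (t • Δ).IsHermitian := by
  unfold Matrix.IsHermitian
  rw [Matrix.conjTranspose_smul, star_trivial, h]

lemma isHermitian_ofReal_smul_one (s : ℝ) :
    ((s:ℂ) • (1 : Matrix (Fin d) (Fin d) ℂ)).IsHermitian := by
  unfold Matrix.IsHermitian
  rw [Matrix.conjTranspose_smul, Matrix.conjTranspose_one, Complex.star_def,
    Complex.conj_ofReal]

lemma herm_ts {A Δ : Matrix (Fin d) (Fin d) ℂ} (hA : A.IsHermitian) (hΔ : Δ.IsHermitian)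
    (t s : ℝ) : (A + t • Δ + (s:ℂ) • 1).IsHermitian :=
  (hA.add (isHermitian_smul_real t hΔ)).add (isHermitian_ofReal_smul_one s)

lemma quad_decomp (A Δ : Matrix (Fin d) (Fin d) ℂ) (t s : ℝ) (x : Fin d → ℂ) :
    (star x ⬝ᵥ (A + t • Δ + (s:ℂ) • 1) *ᵥ x).re
      = (star x ⬝ᵥ A *ᵥ x).re + t * (star x ⬝ᵥ Δ *ᵥ x).re + s * S x := by
  rw [Matrix.add_mulVec, Matrix.add_mulVec, dotProduct_add, dotProduct_add,
    Matrix.smul_mulVec, Matrix.smul_mulVec, Matrix.one_mulVec,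
    dotProduct_smul, dotProduct_smul, dot_star_self]
  rw [Complex.add_re, Complex.add_re]
  congr 1
  · congr 1
    exact Complex.smul_re t _
  · rw [smul_eq_mul, ← Complex.ofReal_mul, Complex.ofReal_re]

end TmapAux

open TmapAux

attribute [local instance] Matrix.frobeniusNormedAddCommGroup Matrix.frobeniusNormedSpace

theorem hasDerivAt_mlog {d : ℕ} (A Δ : Matrix (Fin d) (Fin d) ℂ)
    (hA : A.PosDef) (hΔ : Δ.IsHermitian) :
    HasDerivAt (fun t : ℝ => mlog (A + t • Δ)) (Tmap A Δ) 0 := by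
  rcases Nat.eq_zero_or_pos d with rfl | hd
  · have hz : ∀ M : Matrix (Fin 0) (Fin 0) ℂ, M = 0 := fun M => Subsingleton.elim _ _
    have h1 : (fun t : ℝ => mlog (A + t • Δ)) = fun _ => (0 : Matrix (Fin 0) (Fin 0) ℂ) := by
      funext t; exact hz _
    rw [h1, hz (Tmap A Δ)]
    exact hasDerivAt_const _ _
  haveI : Nonempty (Fin d) := Fin.pos_iff_nonempty.mp hd
  -- constants
  set c : ℝ := Finset.univ.inf' Finset.univ_nonempty hA.1.eigenvalues with hcdef
  have hc : 0 < c := by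
    rw [hcdef, Finset.lt_inf'_iff]
    exact fun k _ => hA.eigenvalues_pos k
  have hcA : Coercive c A := quad_re_ge hA.1 (fun k => Finset.inf'_le _ (Finset.mem_univ k))
  set K : ℝ := Finset.univ.sup' Finset.univ_nonempty (fun k => |hΔ.eigenvalues k|) with hKdef
  have hK0 : 0 ≤ K := by
    rw [hKdef]
    exact le_trans (abs_nonneg _) (Finset.le_sup' (fun k => |hΔ.eigenvalues k|)
      (Finset.mem_univ (Classical.arbitrary (Fin d))))
  have hKbd : ∀ k, |hΔ.eigenvalues k| ≤ K := by
    intro k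
    rw [hKdef]
    exact Finset.le_sup' (fun k => |hΔ.eigenvalues k|) (Finset.mem_univ k)
  have hΔbd : ∀ x, |(star x ⬝ᵥ Δ *ᵥ x).re| ≤ K * S x := by
    intro x
    rw [abs_le]
    constructor
    · have h := quad_re_ge hΔ (c := -K)
        (fun k => neg_le.mp (le_trans (neg_le_abs _) (hKbd k))) x
      linarith [h]
    · exact quad_re_le hΔ (fun k => le_trans (le_abs_self _) (hKbd k)) x
  set ε : ℝ := c / (2 * (K + 1)) with hεdef
  have hε : 0 < ε := by positivity
  have hεK : ε * K ≤ c / 2 := by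
    rw [hεdef, div_mul_eq_mul_div, div_le_div_iff₀ (by positivity) (by positivity)]
    nlinarith [hc, hK0]
  have hcoer : ∀ t ∈ Metric.ball (0:ℝ) ε, ∀ s : ℝ, 0 ≤ s →
      Coercive (c/2 + s) (A + t • Δ + (s:ℂ) • 1) := by
    intro t ht s hs x
    rw [quad_decomp A Δ t s x]
    have h1 := hcA x
    have h2 := hΔbd x
    have h3 : |t| < ε := by
      rw [Metric.mem_ball, Real.dist_eq, sub_zero] at ht; exact ht
    have h4 : -(|t| * |(star x ⬝ᵥ Δ *ᵥ x).re|) ≤ t * (star x ⬝ᵥ Δ *ᵥ x).re := by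
      rw [← abs_mul]; exact neg_abs_le _
    have h5 : |t| * |(star x ⬝ᵥ Δ *ᵥ x).re| ≤ ε * (K * S x) :=
      mul_le_mul h3.le h2 (abs_nonneg _) hε.le
    have h6 : ε * (K * S x) ≤ (c/2) * S x := by
      rw [← mul_assoc]
      exact mul_le_mul_of_nonneg_right hεK (S_nonneg x)
    have hexp : (c/2 + s) * S x = c/2 * S x + s * S x := by ring
    linarith [h1, h4, h5, h6, hexp]
  have hherm : ∀ (t s : ℝ), (A + t • Δ + (s:ℂ) • 1).IsHermitian :=
    fun t s => herm_ts hA.1 hΔ t s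
  have hposdef : ∀ t ∈ Metric.ball (0:ℝ) ε, ∀ s : ℝ, 0 ≤ s →
      (A + t • Δ + (s:ℂ) • 1).PosDef :=
    fun t ht s hs => posDef_of_coercive (hherm t s) (by positivity) (hcoer t ht s hs)
  have hposdef0 : ∀ t ∈ Metric.ball (0:ℝ) ε, (A + t • Δ).PosDef := by
    intro t ht
    have h := hposdef t ht 0 le_rfl
    rwa [Complex.ofReal_zero, zero_smul, add_zero] at h
  have hunit : ∀ t ∈ Metric.ball (0:ℝ) ε, ∀ s : ℝ, 0 ≤ s →
      IsUnit (A + t • Δ + (s:ℂ) • 1) :=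
    fun t ht s hs => (hposdef t ht s hs).isUnit
  -- entrywise derivative
  apply hasDerivAt_of_entries
  intro i j
  set F : ℝ → ℝ → ℂ := fun t s => (((1+s)⁻¹ : ℝ) : ℂ) * (1 : Matrix (Fin d) (Fin d) ℂ) i j
    - (A + t • Δ + (s:ℂ) • 1)⁻¹ i j with hFdef
  set F' : ℝ → ℝ → ℂ := fun t s =>
    ((A + t • Δ + (s:ℂ) • 1)⁻¹ * Δ * (A + t • Δ + (s:ℂ) • 1)⁻¹) i j with hF'def
  have key : HasDerivAt (fun t => ∫ s in Set.Ioi (0:ℝ), F t s)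
      (∫ s in Set.Ioi (0:ℝ), F' 0 s) 0 := by
    refine (hasDerivAt_integral_of_dominated_loc_of_deriv_le (𝕜 := ℝ)
      (F := F) (F' := F')
      (bound := fun s => ‖Δ‖ * (Real.sqrt d / (c/2 + s))^2) (Metric.ball_mem_nhds (0:ℝ) hε) ?_ ?_ ?_ ?_ ?_ ?_).2
    · -- measurability of F t for t near 0
      filter_upwards [Metric.ball_mem_nhds (0:ℝ) hε] with t ht
      apply ContinuousOn.aestronglyMeasurable _ measurableSet_Ioi
      apply ContinuousOn.sub
      · apply ContinuousOn.mul _ continuousOn_const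
        apply Complex.continuous_ofReal.comp_continuousOn
        apply ContinuousOn.inv₀ (continuousOn_const.add continuousOn_id)
        intro x hx
        have : (0:ℝ) < x := hx
        exact (show (1:ℝ) + x ≠ 0 by positivity)
      · have hcont := continuousOn_resolvent (A + t • Δ)
          (fun s hs => hunit t ht s (le_of_lt hs))
        intro s hs
        have h2 := ((entryCLM i j).continuous.continuousAt.comp_continuousWithinAt
          (hcont s hs))
        simpa only [Function.comp_def, entryCLM_apply] using h2
    · -- integrability of F 0
      have h0 : (0:ℝ) ∈ Metric.ball (0:ℝ) ε := Metric.mem_ball_self hε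
      have hpd := hposdef0 0 h0
      have heq : F 0 = fun s : ℝ => (((1+s)⁻¹ : ℝ) : ℂ) * (1 : Matrix (Fin d) (Fin d) ℂ) i j
          - ((A + (0:ℝ) • Δ) + (s:ℂ) • 1)⁻¹ i j := rfl
      rw [heq]
      exact integrableOn_entry hpd i j
    · -- measurability of F' 0
      apply ContinuousOn.aestronglyMeasurable _ measurableSet_Ioi
      have h0 : (0:ℝ) ∈ Metric.ball (0:ℝ) ε := Metric.mem_ball_self hε
      have hcont := continuousOn_resolvent (A + (0:ℝ) • Δ)
        (fun s hs => hunit 0 h0 s (le_of_lt hs))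
      intro s hs
      have h1 : ContinuousWithinAt (fun s : ℝ =>
          ((A + (0:ℝ) • Δ + (s:ℂ) • 1)⁻¹ * Δ * (A + (0:ℝ) • Δ + (s:ℂ) • 1)⁻¹)) (Set.Ioi 0) s :=
        ((hcont s hs).mul continuousWithinAt_const).mul (hcont s hs)
      have h2 := ((entryCLM i j).continuous.continuousAt.comp_continuousWithinAt h1)
      simpa only [hF'def, Function.comp_def, entryCLM_apply] using h2
    · -- bound
      rw [ae_restrict_iff' measurableSet_Ioi]
      refine Eventually.of_forall fun s hs => ?_
      intro t ht
      have hs' : (0:ℝ) < s := hs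
      have hco := hcoer t ht s hs'.le
      have hpos : (0:ℝ) < c/2 + s := by positivity
      have hinv : ‖(A + t • Δ + (s:ℂ) • 1)⁻¹‖ ≤ Real.sqrt d / (c/2 + s) :=
        norm_inv_le (hherm t s) hpos hco
      have hq0 : (0:ℝ) ≤ Real.sqrt d / (c/2 + s) := by positivity
      calc ‖F' t s‖ ≤ ‖(A + t • Δ + (s:ℂ) • 1)⁻¹ * Δ * (A + t • Δ + (s:ℂ) • 1)⁻¹‖ :=
            norm_entry_le _ i j
        _ ≤ ‖(A + t • Δ + (s:ℂ) • 1)⁻¹ * Δ‖ * ‖(A + t • Δ + (s:ℂ) • 1)⁻¹‖ :=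
            Matrix.frobenius_norm_mul _ _
        _ ≤ (‖(A + t • Δ + (s:ℂ) • 1)⁻¹‖ * ‖Δ‖) * ‖(A + t • Δ + (s:ℂ) • 1)⁻¹‖ :=
            mul_le_mul_of_nonneg_right (Matrix.frobenius_norm_mul _ _) (norm_nonneg _)
        _ = ‖Δ‖ * (‖(A + t • Δ + (s:ℂ) • 1)⁻¹‖ * ‖(A + t • Δ + (s:ℂ) • 1)⁻¹‖) := by ring
        _ ≤ ‖Δ‖ * ((Real.sqrt d / (c/2 + s)) * (Real.sqrt d / (c/2 + s))) :=
            mul_le_mul_of_nonneg_left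
              (mul_le_mul hinv hinv (norm_nonneg _) hq0) (norm_nonneg Δ)
        _ = ‖Δ‖ * (Real.sqrt d / (c/2 + s))^2 := by ring
    · -- bound integrable
      have heq : (fun s : ℝ => ‖Δ‖ * (Real.sqrt d / (c/2 + s))^2)
          = fun s : ℝ => (‖Δ‖ * d) * ((c/2 + s)^2)⁻¹ := by
        funext s
        rw [div_pow, Real.sq_sqrt (Nat.cast_nonneg d)]
        field_simp
      rw [heq]
      exact (integrableOn_inv_sq (c/2) (half_pos hc)).const_mul _
    · -- differentiability
      rw [ae_restrict_iff' measurableSet_Ioi]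
      refine Eventually.of_forall fun s hs => ?_
      intro t ht
      have hs' : (0:ℝ) < s := hs
      have hu := hunit t ht s hs'.le
      have hGd : HasDerivAt (fun u : ℝ => A + u • Δ + (s:ℂ) • 1) Δ t := by
        have h := (((hasDerivAt_id t).smul_const Δ).const_add A).add_const ((s:ℂ) • 1)
        simp only [id, one_smul] at h
        exact h
      have h1 : HasFDerivAt Ring.inverse
          (-(ContinuousLinearMap.mulLeftRight ℝ _ (↑hu.unit⁻¹) (↑hu.unit⁻¹)))
          (A + t • Δ + (s:ℂ) • 1) := by
        have h := hasFDerivAt_ringInverse (𝕜 := ℝ) hu.unit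
        rwa [IsUnit.unit_spec] at h
      have h2 := h1.comp_hasDerivAt t hGd
      have hcoe : ((hu.unit⁻¹ : (Matrix (Fin d) (Fin d) ℂ)ˣ) : Matrix (Fin d) (Fin d) ℂ)
          = (A + t • Δ + (s:ℂ) • 1)⁻¹ := by
        rw [Matrix.coe_units_inv, IsUnit.unit_spec]
      have h3 : HasDerivAt (fun u : ℝ => (A + u • Δ + (s:ℂ) • 1)⁻¹)
          (-((A + t • Δ + (s:ℂ) • 1)⁻¹ * Δ * (A + t • Δ + (s:ℂ) • 1)⁻¹)) t := by
        have hfun : (fun u : ℝ => (A + u • Δ + (s:ℂ) • 1)⁻¹)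
            = fun u : ℝ => Ring.inverse (A + u • Δ + (s:ℂ) • 1) := by
          funext u; rw [Matrix.nonsing_inv_eq_ringInverse]
        rw [hfun]
        refine h2.congr_deriv ?_
        rw [ContinuousLinearMap.neg_apply, ContinuousLinearMap.mulLeftRight_apply, hcoe]
      have h4 := hasDerivAt_entry h3 i j
      have h5 := h4.const_sub ((((1+s)⁻¹ : ℝ) : ℂ) * (1 : Matrix (Fin d) (Fin d) ℂ) i j)
      have h6 : - ((-((A + t • Δ + (s:ℂ) • 1)⁻¹ * Δ * (A + t • Δ + (s:ℂ) • 1)⁻¹)) i j)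
          = F' t s := by
        rw [hF'def, Matrix.neg_apply, neg_neg]
      rw [h6] at h5
      exact h5
  -- transfer back to mlog
  have hcongr : (fun t : ℝ => mlog (A + t • Δ) i j)
      =ᶠ[nhds (0:ℝ)] (fun t => ∫ s in Set.Ioi (0:ℝ), F t s) := by
    filter_upwards [Metric.ball_mem_nhds (0:ℝ) hε] with t ht
    exact mlog_entry_integral (hposdef0 t ht) i j
  have hTmap : (∫ s in Set.Ioi (0:ℝ), F' 0 s) = Tmap A Δ i j := by
    rw [Tmap, Matrix.of_apply]
    congr 1
    funext s
    rw [hF'def]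
    norm_num [zero_smul]
  rw [← hTmap]
  exact key.congr_of_eventuallyEq hcongr
end

section
/- For positive semidefinite operators A, B on a finite-dimensional Hilbert space with A + B positive definite, Tr((A+B) R_{A+B}(A)) ≥ Tr(A T_{A+B}(A)), where T_C(Δ) = ∫₀^∞ (C+sI)^{-1} Δ (C+sI)^{-1} ds and R_C(Δ) = 2∫₀^∞ (C+sI)^{-1} Δ (C+sI)^{-1} Δ (C+sI)^{-1} ds. -/
open Matrix MeasureTheory Real Filter
open scoped ComplexOrder

attribute [local instance] Matrix.linftyOpNormedAddCommGroup Matrix.linftyOpNormedSpace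
  Matrix.linftyOpNormedRing Matrix.linftyOpNormedAlgebra

namespace LiebAux

lemma entry_le_norm {d : ℕ} (M : Matrix (Fin d) (Fin d) ℂ) (i j : Fin d) : ‖M i j‖ ≤ ‖M‖ := by
  have h := Matrix.linfty_opNNNorm_def M
  have h1 : ‖M i j‖₊ ≤ ∑ k, ‖M i k‖₊ :=
    Finset.single_le_sum (f := fun k => ‖M i k‖₊) (by simp) (Finset.mem_univ j)
  have h2 : (∑ k, ‖M i k‖₊) ≤ ‖M‖₊ :=
    h ▸ Finset.le_sup (f := fun i => ∑ k, ‖M i k‖₊) (Finset.mem_univ i)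
  exact_mod_cast h1.trans h2

lemma trace_le_norm {d : ℕ} (M : Matrix (Fin d) (Fin d) ℂ) : ‖Matrix.trace M‖ ≤ d * ‖M‖ := by
  calc ‖Matrix.trace M‖ ≤ ∑ i, ‖M i i‖ := norm_sum_le _ _
    _ ≤ ∑ _i : Fin d, ‖M‖ := Finset.sum_le_sum fun i _ => entry_le_norm M i i
    _ = d * ‖M‖ := by simp [Finset.sum_const, mul_comm]

lemma continuous_entry {d : ℕ} (i j : Fin d) :
    Continuous fun M : Matrix (Fin d) (Fin d) ℂ => M i j :=
  AddMonoidHomClass.continuous_of_bound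
    (AddMonoidHom.mk' (fun M : Matrix (Fin d) (Fin d) ℂ => M i j) (fun _ _ => rfl)) 1
    (fun M => by rw [one_mul]; exact entry_le_norm M i j)

lemma continuous_trace {d : ℕ} :
    Continuous fun M : Matrix (Fin d) (Fin d) ℂ => Matrix.trace M := by
  have : (fun M : Matrix (Fin d) (Fin d) ℂ => Matrix.trace M) = fun M => ∑ i, M i i := by
    funext M; rfl
  rw [this]
  exact continuous_finset_sum _ fun i _ => continuous_entry i i

lemma deriv_inv_mat {d : ℕ} (C : Matrix (Fin d) (Fin d) ℂ) (s : ℝ) (h : IsUnit (C + (s:ℂ) • 1)) :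
    HasDerivAt (fun t : ℝ => (C + (t:ℂ) • (1:Matrix (Fin d) (Fin d) ℂ))⁻¹)
      (-((C + (s:ℂ) • 1)⁻¹ * (C + (s:ℂ) • 1)⁻¹)) s := by
  have hsmul : ∀ t : ℝ, (t:ℂ) • (1:Matrix (Fin d) (Fin d) ℂ) = t • 1 := by
    intro t; ext i j; simp [Matrix.smul_apply]
  have hg : HasDerivAt (fun t : ℝ => C + (t:ℂ) • (1:Matrix (Fin d) (Fin d) ℂ))
      (1 : Matrix (Fin d) (Fin d) ℂ) s := by
    simp only [hsmul]
    have h0 := ((hasDerivAt_id s).smul_const (1 : Matrix (Fin d) (Fin d) ℂ)).const_add C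
    simp only [id_eq, one_smul] at h0
    exact h0
  have hinv := (hasFDerivAt_ringInverse (𝕜 := ℝ) h.unit).comp_hasDerivAt s hg
  have heq : (fun t : ℝ => Ring.inverse (C + (t:ℂ) • (1:Matrix (Fin d) (Fin d) ℂ)))
      = fun t : ℝ => (C + (t:ℂ) • 1)⁻¹ := by
    funext t; rw [Matrix.nonsing_inv_eq_ringInverse]
  have hu : (↑h.unit⁻¹ : Matrix (Fin d) (Fin d) ℂ) = (C + (s:ℂ) • 1)⁻¹ := by
    rw [Matrix.nonsing_inv_eq_ringInverse, ← Ring.inverse_unit h.unit, h.unit_spec]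
  rw [Function.comp_def, heq] at hinv
  refine hinv.congr_deriv ?_
  simp [hu]

lemma norm_inv_le {d : ℕ} (C : Matrix (Fin d) (Fin d) ℂ) (s : ℝ) (hs : 2*(‖C‖+1) ≤ s) :
    ‖(C + (s:ℂ) • 1)⁻¹‖ ≤ (‖(1:Matrix (Fin d) (Fin d) ℂ)‖+1)/s := by
  have hC0 : (0:ℝ) ≤ ‖C‖ := norm_nonneg _
  have hspos : (0:ℝ) < s := by linarith
  have hsne : (s:ℂ) ≠ 0 := by exact_mod_cast hspos.ne'
  set t : Matrix (Fin d) (Fin d) ℂ := (-(s⁻¹:ℝ) : ℂ) • C with ht_def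
  have hnt : ‖t‖ = s⁻¹ * ‖C‖ := by
    rw [ht_def, norm_smul]; simp [abs_of_pos hspos]
  have htle : ‖t‖ ≤ 1/2 := by
    rw [hnt, inv_mul_le_iff₀ hspos]; linarith
  have ht1 : ‖t‖ < 1 := lt_of_le_of_lt htle (by norm_num)
  set v : Matrix (Fin d) (Fin d) ℂ := ∑' n : ℕ, t ^ n with hv_def
  have hvinv : v * (1 - t) = 1 := (Units.oneSub t ht1).inv_val
  have hnv : ‖v‖ ≤ ‖(1:Matrix (Fin d) (Fin d) ℂ)‖ + 1 := by
    have h1 := tsum_geometric_le_of_norm_lt_one t ht1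
    have h2 : (1 - ‖t‖)⁻¹ ≤ 2 := by
      rw [inv_le_comm₀ (by linarith) (by norm_num)]; linarith
    calc ‖v‖ ≤ ‖(1:Matrix (Fin d) (Fin d) ℂ)‖ - 1 + (1-‖t‖)⁻¹ := h1
      _ ≤ _ := by linarith
  have hfact : C + (s:ℂ) • 1 = (s:ℂ) • ((1:Matrix (Fin d) (Fin d) ℂ) - t) := by
    rw [smul_sub, ht_def, smul_smul]
    push_cast
    rw [mul_neg, mul_inv_cancel₀ hsne]
    simp [sub_neg_eq_add, add_comm]
  have hleft : (((s:ℂ)⁻¹) • v) * (C + (s:ℂ) • 1) = 1 := by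
    rw [hfact, smul_mul_smul_comm, inv_mul_cancel₀ hsne, one_smul, hvinv]
  rw [Matrix.inv_eq_left_inv hleft, norm_smul]
  have hns : ‖(s:ℂ)⁻¹‖ = s⁻¹ := by
    rw [norm_inv]; simp [abs_of_pos hspos]
  rw [hns, div_eq_inv_mul]
  exact mul_le_mul_of_nonneg_left hnv (by positivity)

lemma trace_integral_swap {d : ℕ} (M : Matrix (Fin d) (Fin d) ℂ) (N : ℝ → Matrix (Fin d) (Fin d) ℂ)
    (hi : ∀ i j, IntegrableOn (fun s => N s i j) (Set.Ioi 0) volume) :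
    Matrix.trace (M * Matrix.of fun i j => ∫ s in Set.Ioi (0:ℝ), N s i j)
      = ∫ s in Set.Ioi (0:ℝ), Matrix.trace (M * N s) := by
  have expand : ∀ P : Matrix (Fin d) (Fin d) ℂ,
      Matrix.trace (M * P) = ∑ i, ∑ j, M i j * P j i := by
    intro P; simp [Matrix.trace, Matrix.mul_apply, Matrix.diag]
  rw [expand]
  have h0 : ∀ i j : Fin d, M i j * (Matrix.of fun i j => ∫ s in Set.Ioi (0:ℝ), N s i j) j i
      = ∫ s in Set.Ioi (0:ℝ), M i j * N s j i := by
    intro i j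
    simp only [Matrix.of_apply]
    rw [MeasureTheory.integral_const_mul]
  simp_rw [h0]
  have h1 : ∀ i : Fin d, ∑ j, ∫ s in Set.Ioi (0:ℝ), M i j * N s j i
      = ∫ s in Set.Ioi (0:ℝ), ∑ j, M i j * N s j i :=
    fun i => (MeasureTheory.integral_finset_sum _ fun j _ => (hi j i).const_mul _).symm
  simp_rw [h1]
  refine (MeasureTheory.integral_finset_sum _
    (fun i _ => MeasureTheory.integrable_finset_sum _ fun j _ => (hi j i).const_mul _)).symm.trans ?_
  simp_rw [expand]

lemma integ_master (φ : ℝ → ℂ) (hcont : ContinuousOn φ (Set.Ici 0)) (c s₀ : ℝ) (hs₀ : 0 < s₀)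
    (hb : ∀ s : ℝ, s₀ ≤ s → ‖φ s‖ ≤ c / s^2) : IntegrableOn φ (Set.Ioi 0) volume := by
  have h1 : IntegrableOn φ (Set.Ioc 0 s₀) volume := by
    have h := (hcont.mono (Set.Icc_subset_Ici_self : Set.Icc (0:ℝ) s₀ ⊆ Set.Ici 0)).integrableOn_compact
      (μ := volume) isCompact_Icc
    exact h.mono_set Set.Ioc_subset_Icc_self
  have h2 : IntegrableOn φ (Set.Ioi s₀) volume := by
    have hg : IntegrableOn (fun s : ℝ => c * s ^ (-2 : ℝ)) (Set.Ioi s₀) volume :=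
      (integrableOn_Ioi_rpow_of_lt (by norm_num) hs₀).const_mul c
    refine hg.mono' ?_ ?_
    · have hsub : Set.Ioi s₀ ⊆ Set.Ici (0:ℝ) := fun x hx => le_of_lt (lt_of_le_of_lt hs₀.le hx)
      exact (hcont.mono hsub).aestronglyMeasurable measurableSet_Ioi
    · filter_upwards [ae_restrict_mem measurableSet_Ioi] with s hs
      have hspos : (0:ℝ) < s := lt_trans hs₀ hs
      have hrw : s ^ (-2:ℝ) = (s^2)⁻¹ := by
        rw [Real.rpow_neg hspos.le, ← Real.rpow_natCast s 2]
        norm_num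
      rw [hrw]
      calc ‖φ s‖ ≤ c / s^2 := hb s hs.le
        _ = c * (s^2)⁻¹ := by ring
  have hU : Set.Ioi (0:ℝ) = Set.Ioc 0 s₀ ∪ Set.Ioi s₀ := (Set.Ioc_union_Ioi_eq_Ioi hs₀.le).symm
  rw [hU]
  exact h1.union h2

theorem keyEq {d : ℕ} (C A : Matrix (Fin d) (Fin d) ℂ) (hC : C.PosDef) :
    Matrix.trace (A * Tmap C A) = Matrix.trace (C * Rmap C A) := by
  classical
  set X : ℝ → Matrix (Fin d) (Fin d) ℂ := fun s => (C + (s:ℂ) • 1)⁻¹ with hXdef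
  set O : Set ℝ := {s : ℝ | IsUnit (C + (s:ℂ) • 1)} with hOdef
  have hgcont : Continuous fun s : ℝ => C + (s:ℂ) • (1 : Matrix (Fin d) (Fin d) ℂ) :=
    continuous_const.add ((Complex.continuous_ofReal).smul continuous_const)
  have hOopen : IsOpen O := Units.isOpen.preimage hgcont
  have hIci : Set.Ici (0:ℝ) ⊆ O := by
    intro s hs
    have hps : ((s:ℂ) • (1 : Matrix (Fin d) (Fin d) ℂ)).PosSemidef := by
      rw [Matrix.smul_one_eq_diagonal]
      exact Matrix.posSemidef_diagonal_iff.mpr fun i => by exact_mod_cast hs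
    exact (hC.add_posSemidef hps).isUnit
  have hXd : ∀ s ∈ O, HasDerivAt X (-(X s * X s)) s := fun s hs => deriv_inv_mat C s hs
  have hXcIci : ContinuousOn X (Set.Ici 0) :=
    fun s hs => ((hXd s (hIci hs)).continuousAt).continuousWithinAt
  -- norm bounds
  set K : ℝ := ‖(1:Matrix (Fin d) (Fin d) ℂ)‖ + 1 with hKdef
  set s₀ : ℝ := max 1 (2*(‖C‖+1)) with hs₀def
  have hs₀1 : (1:ℝ) ≤ s₀ := le_max_left _ _
  have hs₀pos : (0:ℝ) < s₀ := lt_of_lt_of_le zero_lt_one hs₀1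
  have hK0 : (0:ℝ) < K := by positivity
  have hXb : ∀ s : ℝ, s₀ ≤ s → ‖X s‖ ≤ K / s :=
    fun s hs => norm_inv_le C s (le_trans (le_max_right _ _) hs)
  -- the integrand families
  set e3 : ℝ → Matrix (Fin d) (Fin d) ℂ := fun s => X s * A * X s with he3def
  set e5 : ℝ → Matrix (Fin d) (Fin d) ℂ := fun s => X s * A * X s * A * X s with he5def
  have hce3 : ContinuousOn e3 (Set.Ici 0) := (hXcIci.mul continuousOn_const).mul hXcIci
  have hce5 : ContinuousOn e5 (Set.Ici 0) := (hce3.mul continuousOn_const).mul hXcIci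
  have hb3 : ∀ s : ℝ, s₀ ≤ s → ‖e3 s‖ ≤ K^2*‖A‖ / s^2 := by
    intro s hs
    have hsp : (0:ℝ) < s := lt_of_lt_of_le hs₀pos hs
    have h1 : ‖e3 s‖ ≤ ‖X s‖ * ‖A‖ * ‖X s‖ :=
      le_trans (norm_mul_le _ _) (mul_le_mul_of_nonneg_right (norm_mul_le _ _) (norm_nonneg _))
    have h2 := hXb s hs
    calc ‖e3 s‖ ≤ ‖X s‖ * ‖A‖ * ‖X s‖ := h1
      _ ≤ (K/s) * ‖A‖ * (K/s) := by
          apply mul_le_mul (mul_le_mul_of_nonneg_right h2 (norm_nonneg _)) h2 (norm_nonneg _)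
          positivity
      _ = K^2*‖A‖ / s^2 := by field_simp
  have hb5 : ∀ s : ℝ, s₀ ≤ s → ‖e5 s‖ ≤ K^3*‖A‖^2 / s^2 := by
    intro s hs
    have hsp : (0:ℝ) < s := lt_of_lt_of_le hs₀pos hs
    have hs1 : (1:ℝ) ≤ s := le_trans hs₀1 hs
    have h1 : ‖e5 s‖ ≤ ‖e3 s‖ * ‖A‖ * ‖X s‖ :=
      le_trans (norm_mul_le _ _) (mul_le_mul_of_nonneg_right (norm_mul_le _ _) (norm_nonneg _))
    have h2 := hXb s hs
    have h3 := hb3 s hs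
    calc ‖e5 s‖ ≤ ‖e3 s‖ * ‖A‖ * ‖X s‖ := h1
      _ ≤ (K^2*‖A‖/s^2) * ‖A‖ * (K/s) := by
          apply mul_le_mul (mul_le_mul_of_nonneg_right h3 (norm_nonneg _)) h2 (norm_nonneg _)
          positivity
      _ = K^3*‖A‖^2 / s^3 := by field_simp
      _ ≤ K^3*‖A‖^2 / s^2 := by
          apply div_le_div_of_nonneg_left (by positivity) (by positivity)
          calc s^2 = s^2 * 1 := by ring
            _ ≤ s^2 * s := by nlinarith
            _ = s^3 := by ring
  have hie3 : ∀ i j, IntegrableOn (fun s => e3 s i j) (Set.Ioi 0) volume := fun i j =>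
    integ_master _ ((continuous_entry i j).comp_continuousOn hce3) _ s₀ hs₀pos
      (fun s hs => le_trans (entry_le_norm _ i j) (hb3 s hs))
  have hie5 : ∀ i j, IntegrableOn (fun s => e5 s i j) (Set.Ioi 0) volume := fun i j =>
    integ_master _ ((continuous_entry i j).comp_continuousOn hce5) _ s₀ hs₀pos
      (fun s hs => le_trans (entry_le_norm _ i j) (hb5 s hs))
  -- the trace functions
  set f : ℝ → ℂ := fun s => Matrix.trace (A * X s * A * X s) with hfdef
  set τ : ℝ → ℂ := fun s => Matrix.trace (C * e5 s) with hτdef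
  have hd0 : (0:ℝ) ≤ (d:ℝ) := Nat.cast_nonneg d
  have hfe3 : ∀ s : ℝ, f s = Matrix.trace (A * e3 s) := by
    intro s
    show Matrix.trace (A * X s * A * X s) = Matrix.trace (A * (X s * A * X s))
    simp only [Matrix.mul_assoc]
  have hfcont : ContinuousOn f (Set.Ici 0) := by
    have hc : ContinuousOn (fun s => Matrix.trace (A * e3 s)) (Set.Ici 0) :=
      continuous_trace.comp_continuousOn (continuousOn_const.mul hce3)
    exact hc.congr fun x _ => hfe3 x
  have hfb : ∀ s : ℝ, s₀ ≤ s → ‖f s‖ ≤ (d*(‖A‖^2*K^2)) / s^2 := by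
    intro s hs
    have hsp : (0:ℝ) < s := lt_of_lt_of_le hs₀pos hs
    rw [hfe3]
    calc ‖Matrix.trace (A * e3 s)‖ ≤ d * ‖A * e3 s‖ := trace_le_norm _
      _ ≤ d * (‖A‖ * ‖e3 s‖) := mul_le_mul_of_nonneg_left (norm_mul_le _ _) hd0
      _ ≤ d * (‖A‖ * (K^2*‖A‖/s^2)) := mul_le_mul_of_nonneg_left
            (mul_le_mul_of_nonneg_left (hb3 s hs) (norm_nonneg _)) hd0
      _ = (d*(‖A‖^2*K^2)) / s^2 := by simp only [div_eq_mul_inv]; ring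
  have hf_int : IntegrableOn f (Set.Ioi 0) volume :=
    integ_master f hfcont _ s₀ hs₀pos hfb
  have hτcont : ContinuousOn τ (Set.Ici 0) :=
    continuous_trace.comp_continuousOn (continuousOn_const.mul hce5)
  have hτb : ∀ s : ℝ, s₀ ≤ s → ‖τ s‖ ≤ (d*(‖C‖*(K^3*‖A‖^2))) / s^2 := by
    intro s hs
    calc ‖τ s‖ ≤ d * ‖C * e5 s‖ := trace_le_norm _
      _ ≤ d * (‖C‖ * ‖e5 s‖) := mul_le_mul_of_nonneg_left (norm_mul_le _ _) hd0
      _ ≤ d * (‖C‖ * (K^3*‖A‖^2/s^2)) := mul_le_mul_of_nonneg_left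
            (mul_le_mul_of_nonneg_left (hb5 s hs) (norm_nonneg _)) hd0
      _ = (d*(‖C‖*(K^3*‖A‖^2))) / s^2 := by simp only [div_eq_mul_inv]; ring
  have hτ_int : IntegrableOn τ (Set.Ioi 0) volume :=
    integ_master τ hτcont _ s₀ hs₀pos hτb
  -- derivative of f
  have htrD : ∀ (P : ℝ → Matrix (Fin d) (Fin d) ℂ) (P' : Matrix (Fin d) (Fin d) ℂ) (s : ℝ),
      HasDerivAt P P' s → HasDerivAt (fun t => Matrix.trace (P t)) (Matrix.trace P') s := by
    intro P P' s hP
    have := (LinearMap.toContinuousLinearMap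
      (Matrix.traceLinearMap (Fin d) ℝ ℂ)).hasFDerivAt.comp_hasDerivAt s hP
    exact this
  have hfd : ∀ s ∈ O, HasDerivAt f
      (Matrix.trace (A * -(X s * X s) * A * X s + A * X s * A * -(X s * X s))) s := by
    intro s hs
    have h1 : HasDerivAt (fun t => A * X t) (A * -(X s * X s)) s := (hXd s hs).const_mul A
    have h2 : HasDerivAt (fun t => A * X t * A) (A * -(X s * X s) * A) s := h1.mul_const A
    have h3 := h2.mul (hXd s hs)
    exact htrD _ _ s h3
  -- F and its derivative
  set F : ℝ → ℂ := fun s => (s:ℝ) • f s with hFdef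
  set F' : ℝ → ℂ := fun s => 2 * τ s - f s with hF'def
  have hCX : ∀ s : ℝ, s ∈ Set.Ici (0:ℝ) → C * X s = 1 - (s:ℂ) • X s := by
    intro s hs
    have hu := hIci hs
    have h1 : (C + (s:ℂ) • 1) * X s = 1 :=
      Matrix.mul_nonsing_inv _ ((Matrix.isUnit_iff_isUnit_det _).1 hu)
    have h2 : C * X s + ((s:ℂ) • 1) * X s = 1 := by rw [← add_mul]; exact h1
    rw [smul_mul_assoc, one_mul] at h2
    rw [eq_sub_iff_add_eq]
    exact h2
  have hpt : ∀ s : ℝ, s ∈ Set.Ici (0:ℝ) →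
      f s + (s:ℝ) • (Matrix.trace (A * -(X s * X s) * A * X s + A * X s * A * -(X s * X s)))
        = F' s := by
    intro s hs
    have c1 : Matrix.trace (A * (X s * X s) * A * X s) = Matrix.trace (e5 s) := by
      rw [show A * (X s * X s) * A * X s = (A * X s) * (X s * A * X s) by
        simp only [Matrix.mul_assoc], Matrix.trace_mul_comm]
      simp only [he5def, Matrix.mul_assoc]
    have c2 : Matrix.trace (A * X s * A * (X s * X s)) = Matrix.trace (e5 s) := by
      rw [show A * X s * A * (X s * X s) = (A * X s * A * X s) * X s by
        simp only [Matrix.mul_assoc], Matrix.trace_mul_comm]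
      simp only [he5def, Matrix.mul_assoc]
    have hdf : Matrix.trace (A * -(X s * X s) * A * X s + A * X s * A * -(X s * X s))
        = -2 * Matrix.trace (e5 s) := by
      rw [Matrix.trace_add]
      rw [show A * -(X s * X s) * A * X s = -(A * (X s * X s) * A * X s) by
        simp only [Matrix.mul_neg, Matrix.neg_mul]]
      rw [show A * X s * A * -(X s * X s) = -(A * X s * A * (X s * X s)) by
        simp only [Matrix.mul_neg]]
      rw [Matrix.trace_neg, Matrix.trace_neg, c1, c2]
      ring
    have hτs : τ s = f s - (s:ℂ) * Matrix.trace (e5 s) := by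
      have e2 : C * e5 s = (C * X s) * (A * X s * A * X s) := by
        show C * (X s * A * X s * A * X s) = _
        simp only [Matrix.mul_assoc]
      have e4 : X s * (A * X s * A * X s) = e5 s := by
        show _ = X s * A * X s * A * X s
        simp only [Matrix.mul_assoc]
      show Matrix.trace (C * e5 s) = Matrix.trace (A * X s * A * X s) - _
      rw [e2, hCX s hs, sub_mul, one_mul, smul_mul_assoc, Matrix.trace_sub,
        Matrix.trace_smul, e4, smul_eq_mul]
    show f s + _ = 2 * τ s - f s
    rw [hdf, hτs, Complex.real_smul]
    ring
  have hFd : ∀ s ∈ O, HasDerivAt F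
      ((f s : ℂ) + (s:ℝ) • (Matrix.trace (A * -(X s * X s) * A * X s
        + A * X s * A * -(X s * X s)))) s := by
    intro s hs
    have h := (hasDerivAt_id s).smul (hfd s hs)
    rw [one_smul, add_comm] at h
    exact h
  have hFd' : ∀ s ∈ Set.Ioi (0:ℝ), HasDerivAt F (F' s) s := by
    intro s hs
    have hs' : s ∈ Set.Ici (0:ℝ) := Set.mem_Ici.mpr (le_of_lt (Set.mem_Ioi.mp hs))
    have h := hFd s (hIci hs')
    rwa [hpt s hs'] at h
  have hF'int : IntegrableOn F' (Set.Ioi 0) volume := by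
    have : IntegrableOn (fun s => 2 * τ s - f s) (Set.Ioi 0) volume :=
      (hτ_int.const_mul 2).sub hf_int
    exact this
  have hcont0 : ContinuousWithinAt F (Set.Ici 0) 0 :=
    ((hFd 0 (hIci Set.self_mem_Ici)).continuousAt).continuousWithinAt
  have htend : Tendsto F atTop (nhds (0:ℂ)) := by
    apply squeeze_zero_norm' (a := fun s : ℝ => (d*(‖A‖^2*K^2)) * s⁻¹)
    · filter_upwards [eventually_ge_atTop s₀] with s hs
      have hsp : (0:ℝ) < s := lt_of_lt_of_le hs₀pos hs
      have h1 : ‖F s‖ = s * ‖f s‖ := by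
        show ‖(s:ℝ) • f s‖ = _
        rw [norm_smul, Real.norm_eq_abs, abs_of_pos hsp]
      rw [h1]
      calc s * ‖f s‖ ≤ s * ((d*(‖A‖^2*K^2)) / s^2) :=
            mul_le_mul_of_nonneg_left (hfb s hs) hsp.le
        _ = (d*(‖A‖^2*K^2)) * s⁻¹ := by
            rw [div_eq_mul_inv]
            field_simp
    · have h := tendsto_inv_atTop_zero.const_mul (d*(‖A‖^2*K^2))
      simpa using h
  have hFTC := integral_Ioi_of_hasDerivAt_of_tendsto hcont0 hFd' hF'int htend
  have hF0 : F 0 = 0 := by show ((0:ℝ) • f 0 : ℂ) = 0; simp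
  rw [hF0, sub_zero] at hFTC
  -- ∫ F' = 0  gives  ∫ f = 2 ∫ τ
  have hsplit : ∫ s in Set.Ioi (0:ℝ), F' s
      = 2 * (∫ s in Set.Ioi (0:ℝ), τ s) - ∫ s in Set.Ioi (0:ℝ), f s := by
    have h1 : ∫ s in Set.Ioi (0:ℝ), F' s
        = (∫ s in Set.Ioi (0:ℝ), 2 * τ s) - ∫ s in Set.Ioi (0:ℝ), f s :=
      MeasureTheory.integral_sub (hτ_int.const_mul 2) hf_int
    rw [h1, MeasureTheory.integral_const_mul]
  have hmain : ∫ s in Set.Ioi (0:ℝ), f s = 2 * ∫ s in Set.Ioi (0:ℝ), τ s := by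
    rw [hsplit] at hFTC
    linear_combination -hFTC
  -- assembly
  have hT : Matrix.trace (A * Tmap C A) = ∫ s in Set.Ioi (0:ℝ), f s := by
    have hTm : Tmap C A = Matrix.of fun i j => ∫ s in Set.Ioi (0:ℝ), (e3 s) i j := rfl
    rw [hTm, trace_integral_swap A e3 hie3]
    exact MeasureTheory.integral_congr_ae (Filter.Eventually.of_forall fun s => (hfe3 s).symm)
  have hR : Matrix.trace (C * Rmap C A) = 2 * ∫ s in Set.Ioi (0:ℝ), τ s := by
    have hRm : Rmap C A = (2:ℂ) • Matrix.of fun i j => ∫ s in Set.Ioi (0:ℝ), (e5 s) i j := by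
      ext i j
      simp only [Rmap, Matrix.smul_apply, Matrix.of_apply, smul_eq_mul]
      rfl
    rw [hRm, mul_smul_comm, Matrix.trace_smul, trace_integral_swap C e5 hie5, smul_eq_mul]
  rw [hT, hR, hmain]

end LiebAux


theorem lieb_R_ge_T {d : ℕ} (A B : Matrix (Fin d) (Fin d) ℂ)
    (hA : A.PosSemidef) (hB : B.PosSemidef) (hAB : (A + B).PosDef) :
    (Matrix.trace (A * Tmap (A + B) A)).re ≤
      (Matrix.trace ((A + B) * Rmap (A + B) A)).re := by
  have h := LiebAux.keyEq (A + B) A hAB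
  exact le_of_eq (congrArg Complex.re h)
end

section
/- For positive semidefinite operators A, B with A + B positive definite, R_{A+B}(A) ≤ I in the Loewner order, where R_C(Δ) = 2∫₀^∞ (C+sI)^{-1} Δ (C+sI)^{-1} Δ (C+sI)^{-1} ds. -/
open Matrix MeasureTheory Real Filter
open scoped ComplexOrder

lemma aux_ne {a : ℝ} (ha : 0 < a) {s : ℝ} (hs : 0 ≤ s) : ((a:ℂ) + s) ≠ 0 := by
  have : ((a:ℂ) + s) = ((a + s : ℝ) : ℂ) := by push_cast; ring
  rw [this]
  exact_mod_cast (by linarith : a + s ≠ 0)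

lemma aux_hasDerivAt_x (a : ℝ) (s : ℝ) : HasDerivAt (fun t : ℝ => ((a:ℂ) + t)) 1 s := by
  simpa using (Complex.ofRealCLM.hasDerivAt (x := s)).const_add (a:ℂ)

lemma aux_hasDerivAt_inv {a : ℝ} (ha : 0 < a) {s : ℝ} (hs : 0 ≤ s) :
    HasDerivAt (fun t : ℝ => ((a:ℂ) + t)⁻¹) (-(((a:ℂ) + s)^2)⁻¹) s := by
  have := (hasDerivAt_const s (1:ℂ)).div (aux_hasDerivAt_x a s) (aux_ne ha hs)
  refine HasDerivAt.congr_deriv (this.congr_of_eventuallyEq ?_) ?_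
  · filter_upwards with t using by simp
  · field_simp; ring

lemma aux_base_integrable : IntegrableOn (fun s : ℝ => ((1+s)⁻¹)^2) (Set.Ioi (0:ℝ)) := by
  have hderiv : ∀ x ∈ Set.Ici (0:ℝ), HasDerivAt (fun s : ℝ => -(1+s)⁻¹) (((1+x)⁻¹)^2) x := by
    intro x hx
    have h1 : HasDerivAt (fun s : ℝ => 1 + s) 1 x := (hasDerivAt_id x).const_add 1
    have h2 := (h1.inv (by simp at hx; nlinarith)).neg
    refine h2.congr_deriv ?_
    rw [neg_div, neg_neg, one_div, inv_pow]
  have htend : Tendsto (fun s : ℝ => -(1+s)⁻¹) atTop (nhds 0) := by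
    rw [show (0:ℝ) = -0 by ring]
    exact ((tendsto_atTop_add_const_left _ 1 tendsto_id).inv_tendsto_atTop).neg
  exact integrableOn_Ioi_deriv_of_nonneg' hderiv (fun x hx => by positivity) htend

lemma aux_bound {a : ℝ} (ha : 0 < a) {s : ℝ} (hs : 0 ≤ s) :
    (a + s)⁻¹ ≤ (min a 1)⁻¹ * (1+s)⁻¹ := by
  rw [← mul_inv]
  have h1 : min a 1 * (1 + s) ≤ a + s := by
    have h2 : min a 1 ≤ a := min_le_left _ _
    have h3 : min a 1 ≤ 1 := min_le_right _ _
    nlinarith [lt_min ha one_pos]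
  have h4 : 0 < min a 1 * (1 + s) := by positivity
  exact inv_anti₀ h4 h1

lemma aux_contOn_inv {a : ℝ} (ha : 0 < a) :
    ContinuousOn (fun s : ℝ => ((a:ℂ) + s)⁻¹) (Set.Ioi (0:ℝ)) := by
  apply ContinuousOn.inv₀
  · exact (continuous_const.add Complex.continuous_ofReal).continuousOn
  · exact fun s hs => aux_ne ha (le_of_lt hs)

lemma aux_norm_inv {a : ℝ} (ha : 0 < a) {s : ℝ} (hs : 0 ≤ s) :
    ‖((a:ℂ) + s)⁻¹‖ = (a + s)⁻¹ := by
  have : ((a:ℂ) + s) = ((a + s : ℝ) : ℂ) := by push_cast; ring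
  rw [this, ← Complex.ofReal_inv, Complex.norm_real, Real.norm_eq_abs,
    abs_of_pos (by positivity)]

lemma aux_int2 {a c : ℝ} (ha : 0 < a) (hc : 0 < c) (z : ℂ) :
    IntegrableOn (fun s : ℝ => ((a:ℂ)+s)⁻¹ * z * ((c:ℂ)+s)⁻¹) (Set.Ioi (0:ℝ)) := by
  apply Integrable.mono' (g := fun s : ℝ => ((min a 1)⁻¹ * (min c 1)⁻¹ * ‖z‖) * ((1+s)⁻¹)^2)
    (aux_base_integrable.const_mul _)
  · exact (((aux_contOn_inv ha).mul continuousOn_const).mul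
      (aux_contOn_inv hc)).aestronglyMeasurable measurableSet_Ioi
  · filter_upwards [ae_restrict_mem measurableSet_Ioi] with s hs
    have hs' : (0:ℝ) ≤ s := le_of_lt hs
    rw [norm_mul, norm_mul, aux_norm_inv ha hs', aux_norm_inv hc hs']
    calc (a+s)⁻¹ * ‖z‖ * (c+s)⁻¹
        ≤ ((min a 1)⁻¹ * (1+s)⁻¹) * ‖z‖ * ((min c 1)⁻¹ * (1+s)⁻¹) := by
          gcongr <;> first | positivity | exact aux_bound ha hs' | exact aux_bound hc hs'
      _ = ((min a 1)⁻¹ * (min c 1)⁻¹ * ‖z‖) * ((1+s)⁻¹)^2 := by ring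

lemma aux_int3 {a b c : ℝ} (ha : 0 < a) (hb : 0 < b) (hc : 0 < c) (z w : ℂ) :
    IntegrableOn (fun s : ℝ => ((a:ℂ)+s)⁻¹ * z * ((b:ℂ)+s)⁻¹ * w * ((c:ℂ)+s)⁻¹)
      (Set.Ioi (0:ℝ)) := by
  apply Integrable.mono'
    (g := fun s : ℝ => ((min a 1)⁻¹ * b⁻¹ * (min c 1)⁻¹ * ‖z‖ * ‖w‖) * ((1+s)⁻¹)^2)
    (aux_base_integrable.const_mul _)
  · exact (((((aux_contOn_inv ha).mul continuousOn_const).mul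
      (aux_contOn_inv hb)).mul continuousOn_const).mul
      (aux_contOn_inv hc)).aestronglyMeasurable measurableSet_Ioi
  · filter_upwards [ae_restrict_mem measurableSet_Ioi] with s hs
    have hs' : (0:ℝ) ≤ s := le_of_lt hs
    rw [norm_mul, norm_mul, norm_mul, norm_mul, aux_norm_inv ha hs', aux_norm_inv hb hs',
      aux_norm_inv hc hs']
    have hbb : (b+s)⁻¹ ≤ b⁻¹ := by
      apply inv_anti₀ hb; linarith
    calc (a+s)⁻¹ * ‖z‖ * (b+s)⁻¹ * ‖w‖ * (c+s)⁻¹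
        ≤ ((min a 1)⁻¹ * (1+s)⁻¹) * ‖z‖ * b⁻¹ * ‖w‖ * ((min c 1)⁻¹ * (1+s)⁻¹) := by
          gcongr <;> first | positivity | exact aux_bound ha hs' | exact hbb | exact aux_bound hc hs'
      _ = ((min a 1)⁻¹ * b⁻¹ * (min c 1)⁻¹ * ‖z‖ * ‖w‖) * ((1+s)⁻¹)^2 := by ring

lemma aux_lim_inv {a : ℝ} (ha : 0 < a) :
    Tendsto (fun s : ℝ => ((a:ℂ) + s)⁻¹) atTop (nhds 0) := by
  have h1 : Tendsto (fun s : ℝ => (a + s)⁻¹) atTop (nhds 0) :=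
    (tendsto_atTop_add_const_left _ a tendsto_id).inv_tendsto_atTop
  have h2 := (Complex.continuous_ofReal.tendsto 0).comp h1
  simp only [Function.comp_def, Complex.ofReal_inv, Complex.ofReal_zero] at h2
  convert h2 using 2 with s
  push_cast; ring

lemma aux_lim_sxy {a b : ℝ} (ha : 0 < a) (hb : 0 < b) :
    Tendsto (fun s : ℝ => (s:ℂ) * (((a:ℂ)+s)⁻¹ * ((b:ℂ)+s)⁻¹)) atTop (nhds 0) := by
  have h1 : Tendsto (fun s : ℝ => s * ((a+s)⁻¹ * (b+s)⁻¹)) atTop (nhds 0) := by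
    apply tendsto_of_tendsto_of_tendsto_of_le_of_le'
      (tendsto_const_nhds : Tendsto (fun _ : ℝ => (0:ℝ)) atTop (nhds 0))
      ((tendsto_atTop_add_const_left _ b tendsto_id).inv_tendsto_atTop)
    · filter_upwards [eventually_ge_atTop (0:ℝ)] with s hs
      have : 0 < a + s := by linarith
      have : 0 < b + s := by linarith
      positivity
    · filter_upwards [eventually_ge_atTop (0:ℝ)] with s hs
      have h2 : (0:ℝ) < a + s := by linarith
      have h3 : (0:ℝ) < b + s := by linarith
      rw [← mul_assoc]
      have h4 : s * (a+s)⁻¹ ≤ 1 := by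
        rw [mul_inv_le_iff₀ h2]; linarith
      calc s * (a+s)⁻¹ * (b+s)⁻¹ ≤ 1 * (b+s)⁻¹ := by gcongr
        _ = (b+s)⁻¹ := one_mul _
  have h2 := (Complex.continuous_ofReal.tendsto 0).comp h1
  simp only [Function.comp_def, Complex.ofReal_mul, Complex.ofReal_inv, Complex.ofReal_zero] at h2
  convert h2 using 2 with s
  push_cast; ring

open scoped MatrixOrder in
/-- If `0 ≤ B`, `E` is positive definite and `E - B ⪰ 0`, then `B - B E⁻¹ B ⪰ 0`. -/
lemma aux_sandwich {d : ℕ} {E B : Matrix (Fin d) (Fin d) ℂ}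
    (hE : E.PosDef) (hB : B.PosSemidef) (hEB : (E - B).PosSemidef) :
    (B - B * E⁻¹ * B).PosSemidef := by
  set S := CFC.sqrt E with hSdef
  have hSps : S.PosSemidef := (CFC.sqrt_nonneg E).posSemidef
  have hSS : S * S = E := CFC.sqrt_mul_sqrt_self E hE.posSemidef.nonneg
  have hSdet : IsUnit S.det := by
    have h1 : S.det * S.det = E.det := by rw [← Matrix.det_mul, hSS]
    have h2 : E.det ≠ 0 := hE.det_pos.ne'
    refine isUnit_iff_ne_zero.mpr fun h => h2 ?_
    rw [← h1, h, mul_zero]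
  haveI : Invertible S := S.invertibleOfIsUnitDet hSdet
  have hSiS : S⁻¹ * S = 1 := Matrix.nonsing_inv_mul _ hSdet
  have hSSi : S * S⁻¹ = 1 := Matrix.mul_nonsing_inv _ hSdet
  have hSH : (Sᴴ : Matrix (Fin d) (Fin d) ℂ) = S := hSps.isHermitian
  have hSinvH : ((S⁻¹)ᴴ : Matrix (Fin d) (Fin d) ℂ) = S⁻¹ := hSps.isHermitian.inv
  set Z := S⁻¹ * B * S⁻¹ with hZdef
  have hZ : Z.PosSemidef := by
    have := hB.conjTranspose_mul_mul_same (S⁻¹)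
    rwa [hSinvH] at this
  have h1Z : (1 - Z).PosSemidef := by
    have h3 := hEB.conjTranspose_mul_mul_same (S⁻¹)
    have h4 : S⁻¹ * E * S⁻¹ = 1 := by
      rw [← hSS, show S⁻¹ * (S * S) * S⁻¹ = (S⁻¹ * S) * (S * S⁻¹) from by noncomm_ring,
        hSiS, hSSi, one_mul]
    rwa [hSinvH, Matrix.mul_sub, Matrix.sub_mul, h4] at h3
  set W := CFC.sqrt Z with hWdef
  have hWps : W.PosSemidef := (CFC.sqrt_nonneg Z).posSemidef
  have hWH : (Wᴴ : Matrix (Fin d) (Fin d) ℂ) = W := hWps.isHermitian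
  have hWW : W * W = Z := CFC.sqrt_mul_sqrt_self Z hZ.nonneg
  have hkey : Z - Z * Z = W * (1 - Z) * W := by
    rw [Matrix.mul_sub, Matrix.sub_mul, mul_one, hWW, ← hWW]
    rw [show W * (W * W) * W = (W * W) * (W * W) from by noncomm_ring]
  have hZZ : (Z - Z * Z).PosSemidef := by
    rw [hkey]
    have := h1Z.mul_mul_conjTranspose_same W
    rwa [hWH] at this
  have hfin : B - B * E⁻¹ * B = S * (Z - Z * Z) * Sᴴ := by
    rw [hSH, hZdef, ← hSS, Matrix.mul_inv_rev]
    rw [show S * (S⁻¹ * B * S⁻¹ - S⁻¹ * B * S⁻¹ * (S⁻¹ * B * S⁻¹)) * S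
        = (S * S⁻¹) * B * (S⁻¹ * S) - (S * S⁻¹) * (B * (S⁻¹ * S⁻¹) * B) * (S⁻¹ * S)
      from by noncomm_ring, hSiS, hSSi, one_mul, mul_one, one_mul, mul_one]
  rw [hfin]
  exact hZZ.mul_mul_conjTranspose_same S

lemma diag3_apply {d : ℕ} (v w : Fin d → ℂ) (M : Matrix (Fin d) (Fin d) ℂ) (i j : Fin d) :
    (Matrix.diagonal v * M * Matrix.diagonal w) i j = v i * M i j * w j := by
  simp [Matrix.mul_diagonal, Matrix.diagonal_mul]

lemma diag5_apply {d : ℕ} (v w u : Fin d → ℂ) (M M' : Matrix (Fin d) (Fin d) ℂ) (i j : Fin d) :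
    (Matrix.diagonal v * M * Matrix.diagonal w * M' * Matrix.diagonal u) i j
      = ∑ k, v i * M i k * w k * M' k j * u j := by
  rw [Matrix.mul_diagonal, Matrix.mul_apply, Finset.sum_mul]
  exact Finset.sum_congr rfl fun k _ => by rw [diag3_apply]
section DiagCase
open Matrix MeasureTheory Real Filter
open scoped ComplexOrder

variable {d : ℕ} (lam : Fin d → ℝ)

/-- abbreviations for the diagonal case -/
noncomputable def dQ (s : ℝ) : Matrix (Fin d) (Fin d) ℂ :=
  Matrix.diagonal fun i => ((lam i : ℂ) + s)⁻¹

variable (B : Matrix (Fin d) (Fin d) ℂ)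

noncomputable def dD : Matrix (Fin d) (Fin d) ℂ := Matrix.diagonal fun i => (lam i : ℂ)

noncomputable def dN (s : ℝ) : Matrix (Fin d) (Fin d) ℂ :=
  dQ lam s * (dD lam - B) * dQ lam s * (dD lam - B) * dQ lam s

noncomputable def dF (s : ℝ) : Matrix (Fin d) (Fin d) ℂ := dQ lam s * B * dQ lam s

noncomputable def dF2 (s : ℝ) : Matrix (Fin d) (Fin d) ℂ :=
  dQ lam s * B * dQ lam s * B * dQ lam s

lemma dQ_herm (s : ℝ) : (dQ lam s)ᴴ = dQ lam s := by
  rw [dQ, Matrix.diagonal_conjTranspose]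
  have h : (star fun i => ((lam i : ℂ) + s)⁻¹) = fun i => ((lam i : ℂ) + s)⁻¹ := by
    funext i
    rw [Pi.star_apply, show ((lam i : ℂ) + s) = ((lam i + s : ℝ) : ℂ) from by push_cast; ring,
      ← Complex.ofReal_inv, RCLike.star_def, Complex.conj_ofReal]
  rw [h]

lemma dN_int (hl : ∀ i, 0 < lam i) (M M' : Matrix (Fin d) (Fin d) ℂ) (i j : Fin d) :
    IntegrableOn (fun s : ℝ => (dQ lam s * M * dQ lam s * M' * dQ lam s) i j)
      (Set.Ioi (0:ℝ)) := by
  have : (fun s : ℝ => (dQ lam s * M * dQ lam s * M' * dQ lam s) i j)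
      = fun s : ℝ => ∑ k, ((lam i : ℂ) + s)⁻¹ * M i k * ((lam k : ℂ) + s)⁻¹ * M' k j
        * ((lam j : ℂ) + s)⁻¹ := by
    funext s; rw [dQ, diag5_apply]
  rw [this]
  exact integrable_finset_sum _ fun k _ => aux_int3 (hl i) (hl k) (hl j) _ _

lemma dF_int (hl : ∀ i, 0 < lam i) (M : Matrix (Fin d) (Fin d) ℂ) (i j : Fin d) :
    IntegrableOn (fun s : ℝ => (dQ lam s * M * dQ lam s) i j) (Set.Ioi (0:ℝ)) := by
  have : (fun s : ℝ => (dQ lam s * M * dQ lam s) i j)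
      = fun s : ℝ => ((lam i : ℂ) + s)⁻¹ * M i j * ((lam j : ℂ) + s)⁻¹ := by
    funext s; rw [dQ, diag3_apply]
  rw [this]
  exact aux_int2 (hl i) (hl j) _


lemma dQ_inv (hl : ∀ i, 0 < lam i) {s : ℝ} (hs : 0 ≤ s) :
    (dD lam + (s:ℂ) • 1)⁻¹ = dQ lam s := by
  refine Matrix.inv_eq_right_inv ?_
  rw [dD, Matrix.smul_one_eq_diagonal, Matrix.diagonal_add, dQ,
    Matrix.diagonal_mul_diagonal]
  rw [show (fun i => ((lam i:ℂ)+s) * ((lam i:ℂ)+s)⁻¹) = fun _ : Fin d => (1:ℂ) from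
    funext fun i => mul_inv_cancel₀ (aux_ne (hl i) hs), Matrix.diagonal_one]

lemma dIden (hl : ∀ i, 0 < lam i) {s : ℝ} (hs : 0 ≤ s) :
    dN lam B s + dF lam B s - dF2 lam B s
      = Matrix.diagonal (fun i => (lam i:ℂ)^2 * (((lam i:ℂ)+s)⁻¹)^3)
        + (-(dF lam B s) + (s:ℂ) • (dQ lam s * dF lam B s + dF lam B s * dQ lam s)) := by
  set P := dQ lam s with hP
  set c := (s:ℂ) with hc
  have hQD : P * dD lam = 1 - c • P := by
    rw [hP, dQ, dD, Matrix.diagonal_mul_diagonal]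
    ext i j
    by_cases hij : i = j
    · subst hij
      simp only [Matrix.diagonal_apply_eq, Matrix.sub_apply, Matrix.smul_apply,
        Matrix.one_apply_eq, smul_eq_mul]
      have hx := aux_ne (hl i) hs
      field_simp
      rw [hc]; ring
    · simp [Matrix.diagonal_apply_ne _ hij, Matrix.one_apply_ne hij]
  have hDQ : dD lam * P = 1 - c • P := by
    rw [← hQD, hP, dQ, dD, Matrix.diagonal_mul_diagonal, Matrix.diagonal_mul_diagonal]
    rw [show (fun i => (lam i:ℂ) * ((lam i:ℂ)+s)⁻¹)
      = (fun i => ((lam i:ℂ)+s)⁻¹ * (lam i:ℂ)) from funext fun i => mul_comm _ _]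
  have hQA : P * (dD lam - B) = 1 - c • P - P * B := by rw [Matrix.mul_sub, hQD]
  have hAQ : (dD lam - B) * P = 1 - c • P - B * P := by rw [Matrix.sub_mul, hDQ]
  have hN : dN lam B s = (1 - c•P - P*B) * P * (1 - c•P - B*P) := by
    rw [dN, show dQ lam s * (dD lam - B) * dQ lam s * (dD lam - B) * dQ lam s
      = (dQ lam s * (dD lam - B)) * dQ lam s * ((dD lam - B) * dQ lam s) from by
        noncomm_ring, hQA, hAQ]
  have hDiag : P - (2*c)•(P*P) + (c^2)•(P*P*P)
      = Matrix.diagonal (fun i => (lam i:ℂ)^2 * (((lam i:ℂ)+s)⁻¹)^3) := by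
    rw [hP, dQ, Matrix.diagonal_mul_diagonal, Matrix.diagonal_mul_diagonal]
    ext i j
    by_cases hij : i = j
    · subst hij
      simp only [Matrix.diagonal_apply_eq, Matrix.sub_apply, Matrix.add_apply,
        Matrix.smul_apply, smul_eq_mul]
      have hx := aux_ne (hl i) hs
      field_simp
      ring
    · simp [Matrix.diagonal_apply_ne _ hij]
  calc dN lam B s + dF lam B s - dF2 lam B s
      = P - (2*c)•(P*P) + (c^2)•(P*P*P) - P*B*P + c•(P*(P*B*P)+(P*B*P)*P) := by
        rw [hN, dF, dF2, ← hP]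
        simp only [mul_sub, sub_mul, mul_add, add_mul, smul_mul_assoc, mul_smul_comm, one_mul,
          mul_one, smul_smul, smul_sub, smul_add, mul_assoc]
        module
    _ = _ := by
        rw [hDiag, dF, ← hP]
        have : P * (P * B * P) + P * B * P * P
            = P * (P * B * P) + (P * B * P) * P := by noncomm_ring
        rw [← this]
        abel

lemma dG_psd (hB : B.PosSemidef) (hl : ∀ i, 0 < lam i)
    (hDB : (dD lam - B).PosSemidef) {s : ℝ} (hs : 0 < s) :
    (dF lam B s - dF2 lam B s).PosSemidef := by
  set E := dD lam + (s:ℂ) • 1 with hE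
  have hEdiag : E = Matrix.diagonal (fun i => ((lam i:ℂ) + s)) := by
    rw [hE, dD, Matrix.smul_one_eq_diagonal, ← Matrix.diagonal_add]
  have hEpos : E.PosDef := by
    rw [hEdiag]
    refine Matrix.posDef_diagonal_iff.mpr fun i => ?_
    rw [show ((lam i:ℂ)+s) = ((lam i + s:ℝ):ℂ) from by push_cast; ring]
    exact_mod_cast (by have := hl i; linarith : (0:ℝ) < lam i + s)
  have hEB : (E - B).PosSemidef := by
    have h1 : ((s:ℂ) • (1 : Matrix (Fin d) (Fin d) ℂ)).PosSemidef := by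
      rw [Matrix.smul_one_eq_diagonal]
      exact Matrix.posSemidef_diagonal_iff.mpr fun i =>
        (by exact_mod_cast hs.le : (0:ℂ) ≤ (s:ℂ))
    have h2 := hDB.add h1
    have h3 : dD lam - B + (s:ℂ)•1 = E - B := by rw [hE]; abel
    rwa [h3] at h2
  have hsand := aux_sandwich hEpos hB hEB
  have hEinv : E⁻¹ = dQ lam s := dQ_inv lam hl hs.le
  rw [hEinv] at hsand
  have hconj := hsand.mul_mul_conjTranspose_same (dQ lam s)
  rw [dQ_herm] at hconj
  have heq : dQ lam s * (B - B * dQ lam s * B) * (dQ lam s)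
      = dF lam B s - dF2 lam B s := by
    rw [dF, dF2]; noncomm_ring
  rwa [heq] at hconj

end DiagCase
section DiagCase2
open Matrix MeasureTheory Real Filter
open scoped ComplexOrder

variable {d : ℕ} (lam : Fin d → ℝ) (B : Matrix (Fin d) (Fin d) ℂ)

lemma dEntry_eq (hl : ∀ i, 0 < lam i) {s : ℝ} (hs : 0 ≤ s) (i j : Fin d) :
    (dN lam B s + dF lam B s - dF2 lam B s) i j
      = (if i = j then (lam i:ℂ)^2 * (((lam i:ℂ)+s)⁻¹)^3 else 0)
        + B i j * (-((((lam i:ℂ)+s)⁻¹) * (((lam j:ℂ)+s)⁻¹))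
          + (s:ℂ) * ((((lam i:ℂ)+s)⁻¹)^2 * ((lam j:ℂ)+s)⁻¹
            + ((lam i:ℂ)+s)⁻¹ * (((lam j:ℂ)+s)⁻¹)^2)) := by
  rw [dIden lam B hl hs]
  have hdF : ∀ k l, dF lam B s k l = ((lam k:ℂ)+s)⁻¹ * B k l * ((lam l:ℂ)+s)⁻¹ :=
    fun k l => by rw [dF, dQ, diag3_apply]
  simp only [Matrix.add_apply, Matrix.neg_apply, Matrix.smul_apply, smul_eq_mul,
    Matrix.diagonal_apply]
  rw [dQ, Matrix.diagonal_mul, Matrix.mul_diagonal]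
  simp only [hdF]
  by_cases hij : i = j
  · subst hij; simp only [if_pos rfl]; ring
  · simp only [if_neg hij]; ring

lemma dFTC (hl : ∀ i, 0 < lam i) (i j : Fin d) :
    ∫ s in Set.Ioi (0:ℝ), (dN lam B s + dF lam B s - dF2 lam B s) i j
      = if i = j then (2⁻¹:ℂ) else 0 := by
  set f : ℝ → ℂ := fun s =>
    (if i = j then -(lam i:ℂ)^2 * (2:ℂ)⁻¹ * (((lam i:ℂ)+s)⁻¹ * ((lam i:ℂ)+s)⁻¹) else 0)
      + (-(s:ℂ)) * (B i j * ((((lam i:ℂ)+s)⁻¹) * (((lam j:ℂ)+s)⁻¹))) with hf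
  have hderiv : ∀ s ∈ Set.Ici (0:ℝ), HasDerivAt f
      ((dN lam B s + dF lam B s - dF2 lam B s) i j) s := by
    intro s hs
    rw [dEntry_eq lam B hl hs]
    have hu : HasDerivAt (fun t : ℝ => -(t:ℂ)) (-1) s := by
      exact (Complex.ofRealCLM.hasDerivAt (x := s)).neg
    have hvi := aux_hasDerivAt_inv (hl i) hs
    have hvj := aux_hasDerivAt_inv (hl j) hs
    have hv : HasDerivAt (fun t : ℝ => B i j * ((((lam i:ℂ)+t)⁻¹) * (((lam j:ℂ)+t)⁻¹)))
        (B i j * ((-(((lam i:ℂ)+s)^2)⁻¹) * (((lam j:ℂ)+s)⁻¹)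
          + (((lam i:ℂ)+s)⁻¹) * (-(((lam j:ℂ)+s)^2)⁻¹))) s := (hvi.mul hvj).const_mul _
    have h2 := hu.mul hv
    have h1 : HasDerivAt (fun t : ℝ =>
        (if i = j then -(lam i:ℂ)^2 * (2:ℂ)⁻¹ * (((lam i:ℂ)+t)⁻¹ * ((lam i:ℂ)+t)⁻¹) else 0))
        (if i = j then (lam i:ℂ)^2 * (((lam i:ℂ)+s)⁻¹)^3 else 0) s := by
      by_cases hij : i = j
      · simp only [if_pos hij]
        have := (hvi.mul hvi).const_mul (-(lam i:ℂ)^2 * (2:ℂ)⁻¹)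
        refine this.congr_deriv ?_
        have hx := aux_ne (hl i) hs
        field_simp
        ring
      · simp only [if_neg hij]
        exact hasDerivAt_const _ _
    have h3 := h1.add h2
    refine h3.congr_deriv ?_
    have hxi := aux_ne (hl i) hs
    have hxj := aux_ne (hl j) hs
    field_simp
    ring
  have htend : Tendsto f atTop (nhds 0) := by
    rw [show (0:ℂ) = 0 + 0 from by ring]
    apply Tendsto.add
    · by_cases hij : i = j
      · simp only [if_pos hij]
        have h9 := ((aux_lim_inv (hl i)).mul (aux_lim_inv (hl i))).const_mul
          (-(lam i:ℂ)^2 * (2:ℂ)⁻¹)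
        rw [mul_zero] at h9
        convert h9 using 2 with s
        ring
      · simp only [if_neg hij]
        exact tendsto_const_nhds
    · rw [show (fun s : ℝ =>
          (-(s:ℂ)) * (B i j * ((((lam i:ℂ)+s)⁻¹) * (((lam j:ℂ)+s)⁻¹))))
          = fun s : ℝ => (-(B i j)) * ((s:ℂ) * ((((lam i:ℂ)+s)⁻¹) * (((lam j:ℂ)+s)⁻¹)))
        from funext fun s => by ring]
      have h9 := (aux_lim_sxy (hl i) (hl j)).const_mul (-(B i j))
      rw [mul_zero] at h9
      exact h9
  have hint : IntegrableOn (fun s => (dN lam B s + dF lam B s - dF2 lam B s) i j)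
      (Set.Ioi (0:ℝ)) := by
    have heq : (fun s => (dN lam B s + dF lam B s - dF2 lam B s) i j)
        = fun s => (dN lam B s) i j + (dF lam B s) i j - (dF2 lam B s) i j := by
      funext s; simp [Matrix.add_apply, Matrix.sub_apply]
    rw [heq]
    exact ((dN_int lam hl (dD lam - B) (dD lam - B) i j).add
      (dF_int lam hl B i j)).sub (dN_int lam hl B B i j)
  have hkey := integral_Ioi_of_hasDerivAt_of_tendsto'
    (f' := fun s => (dN lam B s + dF lam B s - dF2 lam B s) i j) hderiv hint htend
  rw [hkey, hf]
  simp only [Complex.ofReal_zero, add_zero, neg_zero, zero_mul, zero_sub, neg_add_rev,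
    zero_add]
  by_cases hij : i = j
  · simp only [if_pos hij]
    have hx : (lam i : ℂ) ≠ 0 := by exact_mod_cast (hl i).ne'
    field_simp
  · simp only [if_neg hij]
    simp
end DiagCase2
section DiagCase3
open Matrix MeasureTheory Real Filter
open scoped ComplexOrder

variable {d : ℕ} (lam : Fin d → ℝ) (B : Matrix (Fin d) (Fin d) ℂ)

lemma dRmap_entry (hl : ∀ i, 0 < lam i) (i j : Fin d) :
    Rmap (dD lam) (dD lam - B) i j = 2 * ∫ s in Set.Ioi (0:ℝ), dN lam B s i j := by
  rw [Rmap, Matrix.of_apply]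
  refine congrArg (fun z => (2:ℂ) * z) ?_
  refine setIntegral_congr_fun measurableSet_Ioi fun s hs => ?_
  rw [dQ_inv lam hl (le_of_lt hs)]
  rfl

lemma dM_entry (hl : ∀ i, 0 < lam i) (i j : Fin d) :
    (1 - Rmap (dD lam) (dD lam - B)) i j
      = 2 * ((∫ s in Set.Ioi (0:ℝ), dF lam B s i j)
        - ∫ s in Set.Ioi (0:ℝ), dF2 lam B s i j) := by
  have hNint : IntegrableOn (fun s => dN lam B s i j) (Set.Ioi (0:ℝ)) :=
    dN_int lam hl (dD lam - B) (dD lam - B) i j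
  have hFint : IntegrableOn (fun s => dF lam B s i j) (Set.Ioi (0:ℝ)) :=
    dF_int lam hl B i j
  have hF2int : IntegrableOn (fun s => dF2 lam B s i j) (Set.Ioi (0:ℝ)) :=
    dN_int lam hl B B i j
  have e : ∫ s in Set.Ioi (0:ℝ), (dN lam B s + dF lam B s - dF2 lam B s) i j
      = (∫ s in Set.Ioi (0:ℝ), dN lam B s i j)
        + (∫ s in Set.Ioi (0:ℝ), dF lam B s i j)
        - (∫ s in Set.Ioi (0:ℝ), dF2 lam B s i j) := by
    rw [show (fun s => (dN lam B s + dF lam B s - dF2 lam B s) i j)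
        = fun s => dN lam B s i j + dF lam B s i j - dF2 lam B s i j from
      funext fun s => by simp [Matrix.add_apply, Matrix.sub_apply]]
    have hNF : IntegrableOn (fun s => dN lam B s i j + dF lam B s i j)
        (Set.Ioi (0:ℝ)) := hNint.add hFint
    rw [integral_sub hNF hF2int, integral_add hNint hFint]
  have hsplit : (∫ s in Set.Ioi (0:ℝ), dN lam B s i j)
      + (∫ s in Set.Ioi (0:ℝ), dF lam B s i j)
      - (∫ s in Set.Ioi (0:ℝ), dF2 lam B s i j)
      = if i = j then (2⁻¹:ℂ) else 0 := by
    rw [← e, dFTC lam B hl i j]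
  rw [Matrix.sub_apply, dRmap_entry lam B hl i j, Matrix.one_apply]
  have h1 : (if i = j then (1:ℂ) else 0) = 2 * (if i = j then (2⁻¹:ℂ) else 0) := by
    split_ifs <;> norm_num
  rw [h1, ← hsplit]
  ring

lemma diag_psd (hl : ∀ i, 0 < lam i) (hB : B.PosSemidef)
    (hDB : (dD lam - B).PosSemidef) :
    (1 - Rmap (dD lam) (dD lam - B)).PosSemidef := by
  have hBH : Bᴴ = B := hB.1
  have hFH : ∀ s : ℝ, (dF lam B s)ᴴ = dF lam B s := fun s => by
    rw [dF]
    simp only [Matrix.conjTranspose_mul, dQ_herm, hBH, mul_assoc]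
  have hF2H : ∀ s : ℝ, (dF2 lam B s)ᴴ = dF2 lam B s := fun s => by
    rw [dF2]
    simp only [Matrix.conjTranspose_mul, dQ_herm, hBH, mul_assoc]
  have hstarF : ∀ (s : ℝ) (k l : Fin d), star (dF lam B s k l) = dF lam B s l k :=
    fun s k l => by conv_rhs => rw [← hFH s, Matrix.conjTranspose_apply]
  have hstarF2 : ∀ (s : ℝ) (k l : Fin d), star (dF2 lam B s k l) = dF2 lam B s l k :=
    fun s k l => by conv_rhs => rw [← hF2H s, Matrix.conjTranspose_apply]
  have hintconjF : ∀ k l : Fin d, star (∫ s in Set.Ioi (0:ℝ), dF lam B s k l)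
      = ∫ s in Set.Ioi (0:ℝ), dF lam B s l k := by
    intro k l
    calc star (∫ s in Set.Ioi (0:ℝ), dF lam B s k l)
        = ∫ s in Set.Ioi (0:ℝ), (starRingEnd ℂ) (dF lam B s k l) := integral_conj.symm
      _ = ∫ s in Set.Ioi (0:ℝ), dF lam B s l k :=
          setIntegral_congr_fun measurableSet_Ioi fun s _ => hstarF s k l
  have hintconjF2 : ∀ k l : Fin d, star (∫ s in Set.Ioi (0:ℝ), dF2 lam B s k l)
      = ∫ s in Set.Ioi (0:ℝ), dF2 lam B s l k := by
    intro k l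
    calc star (∫ s in Set.Ioi (0:ℝ), dF2 lam B s k l)
        = ∫ s in Set.Ioi (0:ℝ), (starRingEnd ℂ) (dF2 lam B s k l) := integral_conj.symm
      _ = ∫ s in Set.Ioi (0:ℝ), dF2 lam B s l k :=
          setIntegral_congr_fun measurableSet_Ioi fun s _ => hstarF2 s k l
  refine Matrix.posSemidef_iff_dotProduct_mulVec.mpr ⟨?_, ?_⟩
  · -- Hermitian
    ext i j
    rw [Matrix.conjTranspose_apply, dM_entry lam B hl j i, dM_entry lam B hl i j]
    rw [star_mul', star_sub, hintconjF j i, hintconjF2 j i]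
    rw [show star (2:ℂ) = 2 from by norm_num]
  · -- nonneg quadratic form
    intro x
    set q : ℝ → ℂ := fun s => star x ⬝ᵥ ((dF lam B s - dF2 lam B s) *ᵥ x) with hq
    have hq_sum : ∀ s : ℝ, q s = ∑ i, ∑ j, (star (x i) * x j)
        * (dF lam B s i j - dF2 lam B s i j) := by
      intro s
      rw [hq]
      simp only [dotProduct, Matrix.mulVec, Finset.mul_sum, Matrix.sub_apply,
        Pi.star_apply]
      exact Finset.sum_congr rfl fun i _ => Finset.sum_congr rfl fun j _ => by ring
    have hterm_int : ∀ i j : Fin d, IntegrableOn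
        (fun s => (star (x i) * x j) * (dF lam B s i j - dF2 lam B s i j))
        (Set.Ioi (0:ℝ)) :=
      fun i j => ((dF_int lam hl B i j).sub (dN_int lam hl B B i j)).const_mul _
    have hqint : IntegrableOn q (Set.Ioi (0:ℝ)) := by
      rw [show q = fun s => ∑ i, ∑ j, (star (x i) * x j)
          * (dF lam B s i j - dF2 lam B s i j) from funext hq_sum]
      exact integrable_finset_sum _ fun i _ => integrable_finset_sum _ fun j _ =>
        hterm_int i j
    have e1 : ∫ s in Set.Ioi (0:ℝ), q s = ∑ i, ∑ j, (star (x i) * x j)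
        * ((∫ s in Set.Ioi (0:ℝ), dF lam B s i j)
          - ∫ s in Set.Ioi (0:ℝ), dF2 lam B s i j) := by
      rw [show (fun s => q s) = fun s => ∑ i, ∑ j, (star (x i) * x j)
          * (dF lam B s i j - dF2 lam B s i j) from funext hq_sum]
      rw [integral_finset_sum _ fun i _ => integrable_finset_sum _ fun j _ => hterm_int i j]
      refine Finset.sum_congr rfl fun i _ => ?_
      rw [integral_finset_sum _ fun j _ => hterm_int i j]
      refine Finset.sum_congr rfl fun j _ => ?_
      have hFi : IntegrableOn (fun s => dF lam B s i j) (Set.Ioi (0:ℝ)) :=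
        dF_int lam hl B i j
      have hF2i : IntegrableOn (fun s => dF2 lam B s i j) (Set.Ioi (0:ℝ)) :=
        dN_int lam hl B B i j
      rw [integral_const_mul, integral_sub hFi hF2i]
    have hqval : star x ⬝ᵥ ((1 - Rmap (dD lam) (dD lam - B)) *ᵥ x)
        = 2 * ∫ s in Set.Ioi (0:ℝ), q s := by
      calc star x ⬝ᵥ ((1 - Rmap (dD lam) (dD lam - B)) *ᵥ x)
          = ∑ i, ∑ j, star (x i) * ((1 - Rmap (dD lam) (dD lam - B)) i j * x j) := by
            simp only [dotProduct, Matrix.mulVec, Finset.mul_sum, Pi.star_apply]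
        _ = ∑ i, ∑ j, 2 * ((star (x i) * x j) * ((∫ s in Set.Ioi (0:ℝ), dF lam B s i j)
            - ∫ s in Set.Ioi (0:ℝ), dF2 lam B s i j)) := by
            refine Finset.sum_congr rfl fun i _ => Finset.sum_congr rfl fun j _ => ?_
            rw [dM_entry lam B hl i j]; ring
        _ = 2 * ∑ i, ∑ j, (star (x i) * x j) * ((∫ s in Set.Ioi (0:ℝ), dF lam B s i j)
            - ∫ s in Set.Ioi (0:ℝ), dF2 lam B s i j) := by
            rw [Finset.mul_sum]
            exact Finset.sum_congr rfl fun i _ => by rw [Finset.mul_sum]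
        _ = 2 * ∫ s in Set.Ioi (0:ℝ), q s := by rw [e1]
    have hq_nonneg : ∀ s ∈ Set.Ioi (0:ℝ), (0:ℂ) ≤ q s := by
      intro s hs
      rw [hq]
      exact (dG_psd lam B hB hl hDB hs).dotProduct_mulVec_nonneg x
    have hq_re : ∀ s ∈ Set.Ioi (0:ℝ), q s = ((q s).re : ℂ) := by
      intro s hs
      have h0 := Complex.nonneg_iff.mp (hq_nonneg s hs)
      exact Complex.ext (by simp) (by simp [← h0.2])
    have hq_ofReal : ∫ s in Set.Ioi (0:ℝ), q s
        = ((∫ s in Set.Ioi (0:ℝ), (q s).re : ℝ) : ℂ) := by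
      rw [setIntegral_congr_fun measurableSet_Ioi hq_re]
      exact integral_ofReal
    have hr : (0:ℝ) ≤ ∫ s in Set.Ioi (0:ℝ), (q s).re :=
      setIntegral_nonneg measurableSet_Ioi fun s hs => (Complex.nonneg_iff.mp
        (hq_nonneg s hs)).1
    rw [hqval, hq_ofReal, show (2:ℂ) * ((∫ s in Set.Ioi (0:ℝ), (q s).re : ℝ) : ℂ)
      = (((2 * ∫ s in Set.Ioi (0:ℝ), (q s).re : ℝ)) : ℂ) from by push_cast; ring]
    exact Complex.zero_le_real.mpr (by linarith)
end DiagCase3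
section MainProof
open Matrix MeasureTheory Real Filter
open scoped ComplexOrder

lemma integral_conj_entry {d : ℕ} (V W : Matrix (Fin d) (Fin d) ℂ)
    (M : ℝ → Matrix (Fin d) (Fin d) ℂ)
    (hint : ∀ k l, IntegrableOn (fun s => M s k l) (Set.Ioi (0:ℝ))) (i j : Fin d) :
    ∫ s in Set.Ioi (0:ℝ), (V * M s * W) i j
      = ∑ l, ∑ k, V i k * (∫ s in Set.Ioi (0:ℝ), M s k l) * W l j := by
  have e : (fun s => (V * M s * W) i j)
      = fun s => ∑ l, ∑ k, (V i k * W l j) * M s k l := by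
    funext s
    simp only [Matrix.mul_apply, Finset.sum_mul]
    exact Finset.sum_congr rfl fun l _ => Finset.sum_congr rfl fun k _ => by ring
  rw [e, integral_finset_sum _ fun l _ => integrable_finset_sum _ fun k _ =>
    (hint k l).const_mul _]
  refine Finset.sum_congr rfl fun l _ => ?_
  rw [integral_finset_sum _ fun k _ => (hint k l).const_mul _]
  refine Finset.sum_congr rfl fun k _ => ?_
  rw [integral_const_mul]
  ring

theorem Rmap_le_one {d : ℕ} (A B : Matrix (Fin d) (Fin d) ℂ)
    (hA : A.PosSemidef) (hB : B.PosSemidef) (hAB : (A + B).PosDef) :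
    (1 - Rmap (A + B) A).PosSemidef := by
  set C := A + B with hC
  have hH : C.IsHermitian := hAB.1
  set U : Matrix (Fin d) (Fin d) ℂ := (hH.eigenvectorUnitary : Matrix (Fin d) (Fin d) ℂ)
    with hUdef
  set lam : Fin d → ℝ := hH.eigenvalues with hlam
  have hl : ∀ i, 0 < lam i := fun i => hAB.eigenvalues_pos i
  have hUU : U * star U = 1 := (Matrix.mem_unitaryGroup_iff).mp (hH.eigenvectorUnitary).2
  have hUU' : star U * U = 1 := (Matrix.mem_unitaryGroup_iff').mp (hH.eigenvectorUnitary).2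
  have hspec : C = U * dD lam * star U := hH.spectral_theorem
  set B' := star U * B * U with hB'def
  have hB'ps : B'.PosSemidef := by
    rw [hB'def, Matrix.star_eq_conjTranspose]
    exact hB.conjTranspose_mul_mul_same U
  have hUCU : star U * C * U = dD lam := by
    rw [hspec, show star U * (U * dD lam * star U) * U
      = (star U * U) * dD lam * (star U * U) from by noncomm_ring, hUU', one_mul, mul_one]
  have hA' : dD lam - B' = star U * A * U := by
    rw [← hUCU, hB'def, show star U * C * U - star U * B * U
      = star U * (C - B) * U from by noncomm_ring, show C - B = A from by
        rw [hC]; exact add_sub_cancel_right A B]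
  have hDB' : (dD lam - B').PosSemidef := by
    rw [hA', Matrix.star_eq_conjTranspose]
    exact hA.conjTranspose_mul_mul_same U
  have hdiag := diag_psd lam B' hl hB'ps hDB'
  have hdQ_one : ∀ s : ℝ, 0 ≤ s → (dD lam + (s:ℂ)•1) * dQ lam s = 1 := by
    intro s hs
    rw [dD, Matrix.smul_one_eq_diagonal, Matrix.diagonal_add, dQ,
      Matrix.diagonal_mul_diagonal]
    rw [show (fun i => ((lam i:ℂ)+s) * ((lam i:ℂ)+s)⁻¹) = fun _ : Fin d => (1:ℂ) from
      funext fun i => mul_inv_cancel₀ (aux_ne (hl i) hs), Matrix.diagonal_one]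
  have hinvC : ∀ s : ℝ, 0 < s → (C + (s:ℂ)•1)⁻¹ = U * dQ lam s * star U := by
    intro s hs
    apply Matrix.inv_eq_right_inv
    have h2 : C + (s:ℂ)•1 = U * (dD lam + (s:ℂ)•1) * star U := by
      rw [hspec, mul_add, add_mul, show U * ((s:ℂ)•(1 : Matrix (Fin d) (Fin d) ℂ)) * star U
        = (s:ℂ)•(U * star U) from by rw [mul_smul_comm, smul_mul_assoc, mul_one], hUU]
    rw [h2, show U * (dD lam + (s:ℂ)•1) * star U * (U * dQ lam s * star U)
        = U * ((dD lam + (s:ℂ)•1) * (star U * U) * dQ lam s) * star U from by noncomm_ring,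
      hUU', mul_one, hdQ_one s hs.le, mul_one, hUU]
  have hint : ∀ k l, IntegrableOn (fun s => dN lam B' s k l) (Set.Ioi (0:ℝ)) :=
    fun k l => dN_int lam hl (dD lam - B') (dD lam - B') k l
  have hRC : Rmap C A = U * Rmap (dD lam) (dD lam - B') * star U := by
    ext i j
    rw [Rmap, Matrix.of_apply]
    have e2 : Set.EqOn (fun s : ℝ =>
        ((C + (s:ℂ)•1)⁻¹ * A * (C + (s:ℂ)•1)⁻¹ * A * (C + (s:ℂ)•1)⁻¹) i j)
        (fun s : ℝ => (U * dN lam B' s * star U) i j) (Set.Ioi (0:ℝ)) := by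
      intro s hs
      have hP := hinvC s hs
      simp only
      rw [hP]
      congr 1
      rw [dN, hA']
      rw [show U * dQ lam s * star U * A * (U * dQ lam s * star U) * A
          * (U * dQ lam s * star U)
          = U * (dQ lam s * ((star U * A * U) * (dQ lam s * ((star U * A * U) * dQ lam s))))
            * star U from by noncomm_ring]
      rw [show dQ lam s * (star U * A * U) * dQ lam s * (star U * A * U) * dQ lam s
          = dQ lam s * ((star U * A * U) * (dQ lam s * ((star U * A * U) * dQ lam s)))
        from by noncomm_ring]
    rw [setIntegral_congr_fun measurableSet_Ioi e2,
      integral_conj_entry U (star U) (fun s => dN lam B' s) hint i j]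
    have e3 : (U * Rmap (dD lam) (dD lam - B') * star U) i j
        = ∑ l, ∑ k, U i k * (Rmap (dD lam) (dD lam - B') k l) * (star U) l j := by
      simp only [Matrix.mul_apply, Finset.sum_mul]
    rw [e3, Finset.mul_sum]
    refine Finset.sum_congr rfl fun l _ => ?_
    rw [Finset.mul_sum]
    refine Finset.sum_congr rfl fun k _ => ?_
    rw [dRmap_entry lam B' hl k l]
    ring
  have hfin : (1 : Matrix (Fin d) (Fin d) ℂ) - Rmap C A
      = U * (1 - Rmap (dD lam) (dD lam - B')) * star U := by
    rw [hRC, Matrix.mul_sub, Matrix.sub_mul, mul_one, hUU]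
  rw [hfin, Matrix.star_eq_conjTranspose]
  exact hdiag.mul_mul_conjTranspose_same U
end MainProof
end
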